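/- arXiv:2111.04297 — 5 statements merged into one kernel-verified Lean document; each statement's English description precedes it below -/
import Mathlib

section
/- Let P be a monic polynomial of degree 2s over ℂ with roots z_1, 1/z_1, z_2, 1/z_2, ..., z_s, 1/z_s (with multiplicity), where each z_j ≠ 0. Then for every positive integer n, the product ∏_{j=0}^{n-1} P(ε^j) over all n-th roots of unity ε^j equals (-1)^s ∏_{j=1}^{s} (2·T_n(w_j) - 2), where w_j = (1/2)(z_j + z_j^{-1}) and T_n is the n-th Chebyshev polynomial of the first kind. -/
open Polynomial Real

/-!
Writing `P(x) = ∏ⱼ (x - zⱼ)(x - zⱼ⁻¹)` and exchanging the two products reduces the claim to one pair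
of roots. Since `∏ₖ (w - εᵏ) = wⁿ - 1`, the pair `w, w⁻¹` contributes
`(wⁿ - 1)(w⁻ⁿ - 1) = -(wⁿ + w⁻ⁿ - 2)`, and `wⁿ + w⁻ⁿ = 2 Tₙ((w + w⁻¹)/2)` is the Dickson–Chebyshev
identity.
-/

theorem Polynomial.Chebyshev.two_mul_T_eval_half_mul_add {R : Type*} [CommRing R]
    [Invertible (2 : R)] {x y : R} (hxy : x * y = 1) (n : ℕ) :
    2 * (T R n).eval (⅟2 * (x + y)) = x ^ n + y ^ n := by
  simpa [dickson_one_one_eq_chebyshev_T] using dickson_one_one_eval_add_inv x y hxy n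

theorem IsPrimitiveRoot.prod_range_sub_pow {R : Type*} [CommRing R] [IsDomain R] {ζ : R} {n : ℕ}
    (hζ : IsPrimitiveRoot ζ n) (hn : 0 < n) (x : R) :
    ∏ k ∈ Finset.range n, (x - ζ ^ k) = x ^ n - 1 := by
  simpa [eval_prod] using (congrArg (eval x) (X_pow_sub_C_eq_prod hζ hn (one_pow n))).symm

theorem IsPrimitiveRoot.prod_range_pow_sub_mul_pow_sub {R : Type*} [CommRing R] [IsDomain R]
    {ζ : R} {n : ℕ} (hζ : IsPrimitiveRoot ζ n) (hn : 0 < n) {x y : R} (hxy : x * y = 1) :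
    ∏ k ∈ Finset.range n, (ζ ^ k - x) * (ζ ^ k - y) = -(x ^ n + y ^ n - 2) := by
  have hxyn : x ^ n * y ^ n = 1 := by rw [← mul_pow, hxy, one_pow]
  calc ∏ k ∈ Finset.range n, (ζ ^ k - x) * (ζ ^ k - y)
      = (∏ k ∈ Finset.range n, (x - ζ ^ k)) * ∏ k ∈ Finset.range n, (y - ζ ^ k) := by
        rw [← Finset.prod_mul_distrib]
        exact Finset.prod_congr rfl fun _ _ => by ring
    _ = (x ^ n - 1) * (y ^ n - 1) := by rw [hζ.prod_range_sub_pow hn, hζ.prod_range_sub_pow hn]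
    _ = -(x ^ n + y ^ n - 2) := by linear_combination hxyn

theorem Polynomial.Monic.eval_eq_prod_sub_mul_sub {K ι : Type*} [Field K] [IsAlgClosed K]
    [Fintype ι] {P : K[X]} (hP : P.Monic) {z w : ι → K}
    (hroots : P.roots = Finset.univ.val.map z + Finset.univ.val.map w) (x : K) :
    P.eval x = ∏ j, (x - z j) * (x - w j) := by
  rw [(IsAlgClosed.splits P).eval_eq_prod_roots_of_monic hP, hroots, Multiset.map_add,
    Multiset.prod_add, Multiset.map_map, Multiset.map_map, Finset.prod_mul_distrib]
  rfl

theorem prod_eval_roots_of_unity_eq_chebyshev_general {s : ℕ} (P : Polynomial ℂ)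
    (hmonic : P.Monic)
    (z : Fin s → ℂ) (hz : ∀ j, z j ≠ 0)
    (hroots : P.roots =
      (Finset.univ.val.map z) + (Finset.univ.val.map fun j => (z j)⁻¹))
    (n : ℕ) (hn : 0 < n) :
    ∏ j ∈ Finset.range n, P.eval ((Complex.exp (2 * π * Complex.I / n)) ^ j) =
      (-1) ^ s * ∏ j : Fin s,
        (2 * (Polynomial.Chebyshev.T ℂ n).eval ((1 / 2 : ℂ) * (z j + (z j)⁻¹)) - 2) := by
  have hζ := Complex.isPrimitiveRoot_exp n hn.ne'
  have hpair (j : Fin s) : z j * (z j)⁻¹ = 1 := mul_inv_cancel₀ (hz j)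
  simp_rw [hmonic.eval_eq_prod_sub_mul_sub hroots]
  rw [Finset.prod_comm]
  simp_rw [hζ.prod_range_pow_sub_mul_pow_sub hn (hpair _), one_div, ← invOf_eq_inv,
    Chebyshev.two_mul_T_eval_half_mul_add (hpair _)]
  rw [Finset.prod_neg, Finset.card_univ, Fintype.card_fin]

/-- If `P` is a monic polynomial of degree `2s` over `ℂ` whose roots (with
multiplicity) are `z_1, 1/z_1, …, z_s, 1/z_s` with all `z_j ≠ 0`, then for every
`n > 0`, `∏_{j=0}^{n-1} P(εⁿʲ) = (-1)^s ∏_{j=1}^{s} (2 T_n(w_j) - 2)` where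
`w_j = (z_j + z_j⁻¹)/2` and `ε = exp(2πi/n)`. -/
theorem prod_eval_roots_of_unity_eq_chebyshev {s : ℕ} (P : Polynomial ℂ)
    (hmonic : P.Monic) (hdeg : P.natDegree = 2 * s)
    (z : Fin s → ℂ) (hz : ∀ j, z j ≠ 0)
    (hroots : P.roots =
      (Finset.univ.val.map z) + (Finset.univ.val.map fun j => (z j)⁻¹))
    (n : ℕ) (hn : 0 < n) :
    ∏ j ∈ Finset.range n, P.eval ((Complex.exp (2 * π * Complex.I / n)) ^ j) =
      (-1) ^ s * ∏ j : Fin s,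
        (2 * (Polynomial.Chebyshev.T ℂ n).eval ((1 / 2 : ℂ) * (z j + (z j)⁻¹)) - 2) :=
  prod_eval_roots_of_unity_eq_chebyshev_general P hmonic z hz hroots n hn
end

section
/- Let G be a finite simple graph with Laplacian matrix L. Then det(I + L) equals the number of rooted spanning forests of G, i.e., the number of pairs (F, r) where F is a spanning forest of G and r assigns to each connected component of F a root vertex in that component. -/
set_option linter.unusedSectionVars false
open SimpleGraph Finset Matrix Polynomial
namespace RSF
variable {V : Type*} [Fintype V] [DecidableEq V]

/-- one step of a partial function -/
def nx (c : V → Option V) (o : Option V) : Option V := o.bind c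

@[simp] lemma nx_none (c : V → Option V) : nx c none = none := rfl
@[simp] lemma nx_some (c : V → Option V) (v : V) : nx c (some v) = c v := rfl

/-- acyclicity of a partial function -/
def Acyc (c : V → Option V) : Prop := ∀ v : V, ∃ n, (nx c)^[n] (some v) = none

@[simp] lemma iter_none (c : V → Option V) (n : ℕ) : (nx c)^[n] none = none :=
  Function.iterate_fixed rfl n

lemma iter_absorb {c : V → Option V} {o : Option V} {n m : ℕ}
    (h : (nx c)^[n] o = none) (hle : n ≤ m) : (nx c)^[m] o = none := by
  obtain ⟨k, rfl⟩ := Nat.exists_eq_add_of_le hle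
  rw [add_comm, Function.iterate_add_apply, h, iter_none]

lemma iter_periodic {c : V → Option V} {w : V} {p : ℕ}
    (hper : (nx c)^[p] (some w) = some w) (k : ℕ) :
    (nx c)^[k * p] (some w) = some w := by
  induction k with
  | zero => simp
  | succ k ih => rw [Nat.succ_mul, Function.iterate_add_apply, hper, ih]

lemma no_periodic {c : V → Option V} {w : V}
    (h : ∃ n, (nx c)^[n] (some w) = none) {p : ℕ} (hp : 0 < p)
    (hper : (nx c)^[p] (some w) = some w) : False := by
  obtain ⟨n, hn⟩ := h
  have h1 : (nx c)^[n * p] (some w) = some w := iter_periodic hper n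
  have h2 : (nx c)^[n * p] (some w) = none := iter_absorb hn (Nat.le_mul_of_pos_right n hp)
  simp [h1] at h2

/-- if all iterates up to `m` are defined, there is a periodic point on the orbit -/
lemma exists_periodic {c : V → Option V} {v : V}
    (h : (nx c)^[Fintype.card V] (some v) ≠ none) :
    ∃ w, (∃ k, (nx c)^[k] (some v) = some w) ∧
      ∃ p, 0 < p ∧ (nx c)^[p] (some w) = some w := by
  have hall : ∀ i ∈ Finset.range (Fintype.card V + 1), (nx c)^[i] (some v) ≠ none := by
    intro i hi hnone
    exact h (iter_absorb hnone (Nat.lt_succ_iff.mp (Finset.mem_range.mp hi)))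
  have hmaps : ∀ i ∈ Finset.range (Fintype.card V + 1),
      ((nx c)^[i] (some v)).getD v ∈ (Finset.univ : Finset V) := fun _ _ => Finset.mem_univ _
  obtain ⟨i, hi, j, hj, hij, heq⟩ :=
    Finset.exists_ne_map_eq_of_card_lt_of_maps_to (by simp) hmaps
  wlog hlt : i < j generalizing i j
  · exact this j hj i hi hij.symm heq.symm (by omega)
  obtain ⟨wi, hwi⟩ := Option.ne_none_iff_exists'.mp (hall i hi)
  obtain ⟨wj, hwj⟩ := Option.ne_none_iff_exists'.mp (hall j hj)
  rw [hwi, hwj] at heq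
  simp only [Option.getD_some] at heq
  subst heq
  refine ⟨wi, ⟨i, hwi⟩, j - i, by omega, ?_⟩
  have hj' : (nx c)^[j] (some v) = (nx c)^[j - i] ((nx c)^[i] (some v)) := by
    rw [← Function.iterate_add_apply]; congr 1; omega
  rw [hwi, hwj] at hj'
  exact hj'.symm

lemma Acyc.iter_card {c : V → Option V} (h : Acyc c) (v : V) :
    (nx c)^[Fintype.card V] (some v) = none := by
  by_contra hne
  obtain ⟨w, _, p, hp, hper⟩ := exists_periodic hne
  exact no_periodic (h w) hp hper



/-- the row contributed by a choice `o` at vertex `v` -/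
def rowOf (v : V) (o : Option V) : V → ℤ :=
  Option.rec (Pi.single v 1) (fun u => Pi.single v 1 - Pi.single u 1) o

def Bmat (c : V → Option V) : Matrix V V ℤ := Matrix.of fun v => rowOf v (c v)

def Nmat (c : V → Option V) : Matrix V V ℤ :=
  Matrix.of fun v w => if c v = some w then 1 else 0

lemma Bmat_eq (c : V → Option V) : Bmat c = 1 - Nmat c := by
  ext v w
  simp only [Bmat, Nmat, Matrix.of_apply, Matrix.sub_apply, Matrix.one_apply]
  cases h : c v with
  | none => simp [rowOf, Pi.single_apply, eq_comm]
  | some u =>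
    simp only [rowOf, Pi.sub_apply, Pi.single_apply, Option.some.injEq]
    rw [show ((if w = v then (1:ℤ) else 0) - if w = u then 1 else 0) =
      (if v = w then 1 else 0) - if u = w then 1 else 0 by simp [eq_comm]]

lemma Nmat_pow (c : V → Option V) (n : ℕ) :
    (Nmat c)^n = Matrix.of fun v w => if (nx c)^[n] (some v) = some w then 1 else 0 := by
  induction n with
  | zero =>
    ext v w
    simp [Matrix.one_apply, eq_comm]
  | succ n ih =>
    ext v w
    rw [pow_succ, ih]
    simp only [Matrix.mul_apply, Matrix.of_apply]
    rw [Function.iterate_succ_apply']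
    cases h : (nx c)^[n] (some v) with
    | none => simp [nx]
    | some x =>
      rw [Finset.sum_eq_single x (by intro b _ hb; simp [h, Option.some.injEq, Ne.symm hb])
        (by simp)]
      simp [h, nx, Nmat]
      exact if_congr Iff.rfl rfl rfl

lemma Nmat_nilpotent {c : V → Option V} (h : ∀ v, (nx c)^[Fintype.card V] (some v) = none) :
    (Nmat c)^(Fintype.card V) = 0 := by
  rw [Nmat_pow]
  ext v w
  simp [h v]

lemma det_one_sub_of_nilpotent {N : Matrix V V ℤ} (h : IsNilpotent N) : (1 - N).det = 1 := by
  have hred : N.charpoly - X ^ (Fintype.card V) = 0 :=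
    (Matrix.isNilpotent_charpoly_sub_pow_of_isNilpotent h).eq_zero
  have hcp : N.charpoly = X ^ (Fintype.card V) := by linear_combination (norm := ring_nf) hred
  have heval : (N.charpoly).eval 1 = 1 := by simp [hcp]
  have h2 : (N.charpoly).eval 1 = ((charmatrix N).map (Polynomial.evalRingHom 1)).det := by
    have := RingHom.map_det (Polynomial.evalRingHom 1) (charmatrix N)
    rw [Matrix.charpoly]
    simpa [RingHom.mapMatrix_apply] using this
  have h3 : (charmatrix N).map (Polynomial.evalRingHom 1) = 1 - N := by
    ext i j
    simp only [Matrix.map_apply, charmatrix_apply, Matrix.sub_apply, Matrix.one_apply,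
      Matrix.diagonal_apply, coe_evalRingHom, eval_sub, eval_C]
    by_cases hij : i = j <;> simp [hij]
  rw [h2, h3] at heval
  exact heval

lemma det_Bmat_of_acyc {c : V → Option V} (h : ∀ v, (nx c)^[Fintype.card V] (some v) = none) :
    (Bmat c).det = 1 := by
  rw [Bmat_eq]
  exact det_one_sub_of_nilpotent ⟨Fintype.card V, Nmat_nilpotent h⟩


/-- bounded-fuel acyclicity -/
def CAcyc (c : V → Option V) : Prop := ∀ v : V, (nx c)^[Fintype.card V] (some v) = none

lemma acyc_iff_cacyc {c : V → Option V} : Acyc c ↔ CAcyc c :=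
  ⟨fun h => h.iter_card, fun h v => ⟨Fintype.card V, h v⟩⟩

lemma det_Bmat_of_cyc {c : V → Option V} (h : ¬ CAcyc c) : (Bmat c).det = 0 := by
  classical
  rw [CAcyc] at h
  push_neg at h
  obtain ⟨v, hv⟩ := h
  obtain ⟨u, -, p, hp, hper⟩ := exists_periodic hv
  set C : Finset V := univ.filter (fun t => ∃ k, (nx c)^[k] (some u) = some t) with hC
  have memC : ∀ t, t ∈ C ↔ ∃ k, (nx c)^[k] (some u) = some t := by
    intro t; simp [hC]
  have hu : u ∈ C := (memC u).mpr ⟨0, rfl⟩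
  have key1 : ∀ t ∈ C, (nx c)^[p] (some t) = some t := by
    intro t ht
    obtain ⟨k, hk⟩ := (memC t).mp ht
    have e1 : (nx c)^[p + k] (some u) = (nx c)^[p] (some t) := by
      rw [Function.iterate_add_apply, hk]
    have e2 : (nx c)^[k + p] (some u) = some t := by
      rw [Function.iterate_add_apply, hper, hk]
    rw [← e1, add_comm, e2]
  have key2 : ∀ t ∈ C, ∃ t', c t = some t' ∧ t' ∈ C := by
    intro t ht
    obtain ⟨k, hk⟩ := (memC t).mp ht
    have h1 := key1 t ht
    have h2 : (nx c)^[p - 1] (nx c (some t)) = some t := by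
      rw [← Function.iterate_succ_apply, Nat.succ_eq_add_one, show (p-1) + 1 = p by omega, h1]
    cases hct : c t with
    | none => rw [nx_some, hct] at h2; simp at h2
    | some t' =>
      refine ⟨t', rfl, (memC t').mpr ⟨k + 1, ?_⟩⟩
      rw [Function.iterate_succ_apply', hk, nx_some, hct]
  have key3 : ∀ t ∈ C, ∃ s, s ∈ C ∧ c s = some t ∧ (∀ s' ∈ C, c s' = some t → s' = s) := by
    intro t ht
    obtain ⟨k, hk⟩ := (memC t).mp ht
    have h1 := key1 t ht
    have h2 : (nx c)^[1] ((nx c)^[p - 1] (some t)) = some t := by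
      rw [← Function.iterate_add_apply, show 1 + (p-1) = p by omega, h1]
    cases hpre : (nx c)^[p - 1] (some t) with
    | none => rw [hpre] at h2; simp at h2
    | some s =>
      rw [hpre] at h2
      simp only [Function.iterate_one, nx_some] at h2
      refine ⟨s, (memC s).mpr ⟨(p - 1) + k, ?_⟩, h2, ?_⟩
      · rw [Function.iterate_add_apply, hk, hpre]
      · intro s' hs' hcs'
        have h3 := key1 s' hs'
        have h4 : (nx c)^[p - 1] ((nx c)^[1] (some s')) = some s' := by
          rw [← Function.iterate_add_apply, show (p-1) + 1 = p by omega, h3]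
        rw [Function.iterate_one, nx_some, hcs', hpre] at h4
        exact (Option.some_injective _ h4).symm
  -- the indicator vector of `C` is a left kernel vector
  have hvm : (fun t => if t ∈ C then (1:ℤ) else 0) ᵥ* (Bmat c) = 0 := by
    funext w
    rw [Bmat_eq]
    simp only [vecMul, dotProduct, Pi.zero_apply]
    have : ∀ t, (if t ∈ C then (1:ℤ) else 0) * (1 - Nmat c) t w
        = (if t ∈ C then ((if t = w then (1:ℤ) else 0) - (if c t = some w then 1 else 0)) else 0) := by
      intro t
      by_cases ht : t ∈ C <;>
        simp [ht, Matrix.sub_apply, Matrix.one_apply, Nmat]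
    rw [Finset.sum_congr rfl (fun t _ => this t), Finset.sum_ite_mem, Finset.univ_inter,
      Finset.sum_sub_distrib]
    have e1 : (∑ t ∈ C, if t = w then (1:ℤ) else 0) = if w ∈ C then 1 else 0 := by
      simp [Finset.sum_ite_eq']
    have e2 : (∑ t ∈ C, if c t = some w then (1:ℤ) else 0) = if w ∈ C then 1 else 0 := by
      by_cases hw : w ∈ C
      · obtain ⟨s, hsC, hcs, huniq⟩ := key3 w hw
        rw [if_pos hw, Finset.sum_eq_single s
          (fun t ht hts => by
            by_cases hct : c t = some w
            · exact absurd (huniq t ht hct) hts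
            · simp [hct])
          (fun hs => absurd hsC hs)]
        simp [hcs]
      · rw [if_neg hw]
        apply Finset.sum_eq_zero
        intro t ht
        by_cases hct : c t = some w
        · obtain ⟨t', hct', ht'⟩ := key2 t ht
          rw [hct] at hct'
          exact absurd (Option.some_injective _ hct' ▸ ht') hw
        · simp [hct]
    rw [e1, e2, sub_self]
  refine Matrix.exists_vecMul_eq_zero_iff.mp ⟨_, ?_, hvm⟩
  intro h0
  have := congrFun h0 u
  simp [hu] at this

-- real content:
variable (G : SimpleGraph V) [DecidableRel G.Adj]

/-- the options at a vertex: either no out-arc, or an arc to a neighbor -/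
def options (v : V) : Finset (Option V) :=
  insert none ((G.neighborFinset v).map Function.Embedding.some)

lemma row_decomp (v : V) : (1 + G.lapMatrix ℤ) v = ∑ o ∈ options G v, rowOf v o := by
  funext w
  have hl : (1 + G.lapMatrix ℤ) v w
      = (if v = w then 1 else 0) + ((if v = w then (G.degree v : ℤ) else 0)
        - (if G.Adj v w then 1 else 0)) := by
    simp [SimpleGraph.lapMatrix, SimpleGraph.degMatrix, Matrix.one_apply,
      Matrix.diagonal_apply, Matrix.sub_apply]
  rw [hl, options, Finset.sum_insert (by simp [Function.Embedding.some]), Finset.sum_map,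
    Pi.add_apply, Finset.sum_apply]
  simp only [Function.Embedding.some, Function.Embedding.coeFn_mk]
  rw [Finset.sum_congr rfl (fun u _ => show rowOf v (some u) w
      = ((if w = v then (1:ℤ) else 0) - (if w = u then 1 else 0)) by simp [rowOf, Pi.single_apply])]
  rw [Finset.sum_sub_distrib, Finset.sum_const, Finset.sum_ite_eq (G.neighborFinset v) w]
  rw [show rowOf v none w = if w = v then (1:ℤ) else 0 by simp [rowOf, Pi.single_apply]]
  by_cases hvw : v = w
  · subst hvw
    simp only [if_pos rfl, SimpleGraph.mem_neighborFinset, smul_ite, smul_zero,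
      G.card_neighborFinset_eq_degree]
    simp
  · have h2 : ¬ w = v := fun h => hvw h.symm
    simp only [if_neg hvw, if_neg h2, smul_zero, SimpleGraph.mem_neighborFinset]

open Classical in
theorem step_a :
    (1 + G.lapMatrix ℤ).det
      = ((Fintype.piFinset (options G)).filter CAcyc).card := by
  have h1 : (1 + G.lapMatrix ℤ).det
      = Matrix.detRowAlternating (Matrix.of fun v => ∑ o ∈ options G v, rowOf v o) := by
    congr 1
    ext v w
    exact congrFun (row_decomp G v) w
  rw [h1]
  have h2 := Matrix.detRowAlternating.toMultilinearMap.map_sum_finset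
    (fun v (o : Option V) => rowOf v o) (options G)
  simp only [AlternatingMap.coe_multilinearMap] at h2
  have h3 : (Matrix.detRowAlternating (Matrix.of fun v => ∑ o ∈ options G v, rowOf v o) : ℤ)
      = ∑ r ∈ Fintype.piFinset (options G), (Bmat r).det := by
    rw [show (Matrix.detRowAlternating (Matrix.of fun v => ∑ o ∈ options G v, rowOf v o) : ℤ)
      = Matrix.detRowAlternating (fun v => ∑ o ∈ options G v, rowOf v o) from rfl, h2]
    rfl
  rw [h3]
  rw [Finset.sum_congr rfl (fun r _ => show (Bmat r).det = if CAcyc r then 1 else 0 by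
    by_cases h : CAcyc r
    · rw [if_pos h]; exact det_Bmat_of_acyc h
    · rw [if_neg h]; exact det_Bmat_of_cyc h)]
  simp [Finset.sum_boole]


open Classical in
lemma count_eq :
    Nat.card {c : V → Option V // (∀ v u, c v = some u → G.Adj v u) ∧ Acyc c}
      = ((Fintype.piFinset (options G)).filter CAcyc).card := by
  have hiff : ∀ c : V → Option V,
      ((∀ v u, c v = some u → G.Adj v u) ∧ Acyc c)
        ↔ (c ∈ Fintype.piFinset (options G) ∧ CAcyc c) := by
    intro c
    rw [acyc_iff_cacyc, and_congr_left_iff]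
    intro _
    rw [Fintype.mem_piFinset]
    constructor
    · intro h v
      cases hc : c v with
      | none => simp [options]
      | some u =>
        simp only [options, Finset.mem_insert, Finset.mem_map, Function.Embedding.some,
          Function.Embedding.coeFn_mk]
        exact Or.inr ⟨u, (G.mem_neighborFinset v u).mpr (h v u hc), rfl⟩
    · intro h v u hc
      have := h v
      rw [hc] at this
      simp only [options, Finset.mem_insert, Finset.mem_map, Function.Embedding.some,
        Function.Embedding.coeFn_mk] at this
      obtain ⟨u', hu', he⟩ := this.resolve_left (by simp)
      rw [Option.some_injective _ he] at hu'
      exact (G.mem_neighborFinset v u).mp hu'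
  rw [Nat.card_congr (Equiv.subtypeEquivRight hiff)]
  rw [Nat.card_eq_fintype_card, Fintype.card_subtype]
  congr 1
  ext c
  simp [Fintype.mem_piFinset]

theorem step_a_final :
    (1 + G.lapMatrix ℤ).det
      = Nat.card {c : V → Option V // (∀ v u, c v = some u → G.Adj v u) ∧ Acyc c} := by
  rw [step_a, count_eq]

-- ===== real content =====

lemma Walk.getVert_mem_support' {W : Type*} {H : SimpleGraph W} :
    ∀ {u v : W} (p : H.Walk u v) (i : ℕ), p.getVert i ∈ p.support
  | _, _, SimpleGraph.Walk.nil, _ => by simp [SimpleGraph.Walk.getVert]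
  | _, _, SimpleGraph.Walk.cons h q, 0 => by simp [SimpleGraph.Walk.getVert]
  | _, _, SimpleGraph.Walk.cons h q, (i+1) => by
      rw [SimpleGraph.Walk.getVert_cons_succ, SimpleGraph.Walk.support_cons]
      exact List.mem_cons_of_mem _ (Walk.getVert_mem_support' q i)

/-- follow the partial function for `n` steps, stopping at undefined -/
def followAux (c : V → Option V) : ℕ → V → V
  | 0, v => v
  | n+1, v => match c v with
    | none => v
    | some u => followAux c n u

/-- the root of a vertex -/
def rt (c : V → Option V) (v : V) : V := followAux c (Fintype.card V) v

lemma followAux_none {c : V → Option V} {v : V} (h : c v = none) :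
    ∀ n, followAux c n v = v
  | 0 => rfl
  | n+1 => by simp [followAux, h]

lemma followAux_stab {c : V → Option V} :
    ∀ (n : ℕ) (v : V), (nx c)^[n] (some v) = none →
      ∀ m, n ≤ m → followAux c m v = followAux c n v := by
  intro n
  induction n with
  | zero => intro v h; simp at h
  | succ n ih =>
    intro v h m hm
    cases hc : c v with
    | none => rw [followAux_none hc, followAux_none hc]
    | some u =>
      have h' : (nx c)^[n] (some u) = none := by
        rw [Function.iterate_succ_apply, nx_some, hc] at h
        exact h
      obtain ⟨m', rfl⟩ := Nat.exists_eq_add_of_le hm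
      rw [show n + 1 + m' = (n + m') + 1 from by omega]
      show followAux c ((n + m') + 1) v = followAux c (n + 1) v
      simp only [followAux, hc]
      exact ih u h' (n + m') (by omega)

lemma follow_spec {c : V → Option V} :
    ∀ (n : ℕ) (v : V), (nx c)^[n] (some v) = none → c (followAux c n v) = none := by
  intro n
  induction n with
  | zero => intro v h; simp at h
  | succ n ih =>
    intro v h
    cases hc : c v with
    | none => rw [followAux_none hc]; exact hc
    | some u =>
      have h' : (nx c)^[n] (some u) = none := by
        rw [Function.iterate_succ_apply, nx_some, hc] at h
        exact h
      show c (followAux c (n+1) v) = none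
      simp only [followAux, hc]
      exact ih u h'

lemma rt_eq_of_none {c : V → Option V} {v : V} (h : c v = none) : rt c v = v :=
  followAux_none h _

lemma rt_step {c : V → Option V} (hca : CAcyc c) {v u : V} (h : c v = some u) :
    rt c v = rt c u := by
  have h1 : followAux c (Fintype.card V + 1) v = followAux c (Fintype.card V) v :=
    followAux_stab _ v (hca v) _ (Nat.le_succ _)
  rw [rt, ← h1]
  show followAux c (Fintype.card V + 1) v = _
  simp only [followAux, h]
  rfl

lemma rt_root {c : V → Option V} (hca : CAcyc c) (v : V) : c (rt c v) = none :=
  follow_spec _ v (hca v)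

lemma rt_fix_iff {c : V → Option V} (hca : CAcyc c) {v : V} :
    c v = none ↔ rt c v = v := by
  constructor
  · exact rt_eq_of_none
  · intro h
    have := rt_root hca v
    rwa [h] at this

variable (G : SimpleGraph V) [DecidableRel G.Adj]

/-- the spanning subgraph determined by a partial parent function -/
def Fc (c : V → Option V) (hc : ∀ v u, c v = some u → G.Adj v u) : G.Subgraph where
  verts := Set.univ
  Adj a b := c a = some b ∨ c b = some a
  adj_sub := by rintro a b (h | h); exacts [hc a b h, (hc b a h).symm]
  edge_vert := by intros; trivial
  symm := by constructor; rintro a b (h | h); exacts [Or.inr h, Or.inl h]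

variable {G}

lemma Fc_adj {c : V → Option V} {hc : ∀ v u, c v = some u → G.Adj v u} {a b : V} :
    (Fc G c hc).spanningCoe.Adj a b ↔ (c a = some b ∨ c b = some a) := Iff.rfl

lemma chain_path {c : V → Option V} (hc : ∀ v u, c v = some u → G.Adj v u) (hca : CAcyc c) :
    ∀ (n : ℕ) (v : V), (nx c)^[n] (some v) = none →
      ∃ p : ((Fc G c hc).spanningCoe).Walk v (rt c v), p.IsPath ∧
        ∀ w ∈ p.support, ∃ k, (nx c)^[k] (some v) = some w := by
  intro n
  induction n with
  | zero => intro v h; simp at h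
  | succ n ih =>
    intro v h
    cases hcv : c v with
    | none =>
      refine ⟨SimpleGraph.Walk.nil.copy rfl (rt_eq_of_none hcv).symm, ?_, ?_⟩
      · simp
      · intro w hw
        simp only [SimpleGraph.Walk.support_copy, SimpleGraph.Walk.support_nil,
          List.mem_singleton] at hw
        exact ⟨0, by simp [hw]⟩
    | some u =>
      have h' : (nx c)^[n] (some u) = none := by
        rw [Function.iterate_succ_apply, nx_some, hcv] at h
        exact h
      obtain ⟨p, hp, hsupp⟩ := ih u h'
      have hvn : v ∉ p.support := by
        intro hv
        obtain ⟨k, hk⟩ := hsupp v hv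
        have hper : (nx c)^[k+1] (some v) = some v := by
          rw [Function.iterate_succ_apply, nx_some, hcv]
          exact hk
        exact no_periodic ⟨n+1, h⟩ (Nat.succ_pos k) hper
      have hadj : ((Fc G c hc).spanningCoe).Adj v u := Or.inl hcv
      refine ⟨(SimpleGraph.Walk.cons hadj p).copy rfl (rt_step hca hcv).symm, ?_, ?_⟩
      · rw [SimpleGraph.Walk.isPath_copy]
        exact hp.cons hvn
      · intro w hw
        simp only [SimpleGraph.Walk.support_copy, SimpleGraph.Walk.support_cons,
          List.mem_cons] at hw
        rcases hw with rfl | hw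
        · exact ⟨0, rfl⟩
        · obtain ⟨k, hk⟩ := hsupp w hw
          refine ⟨k+1, ?_⟩
          rw [Function.iterate_succ_apply, nx_some, hcv]
          exact hk

lemma Fc_acyclic {c : V → Option V} (hc : ∀ v u, c v = some u → G.Adj v u) (hca : CAcyc c) :
    ((Fc G c hc).spanningCoe).IsAcyclic := by
  intro v w hw
  classical
  have hedge : ∀ e ∈ w.edges, ∃ a b, e = s(a,b) ∧ c a = some b := by
    intro e he
    induction e using Sym2.ind with
    | _ a b =>
      have hadj : ((Fc G c hc).spanningCoe).Adj a b := w.adj_of_mem_edges he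
      rcases hadj with h | h
      · exact ⟨a, b, rfl, h⟩
      · exact ⟨b, a, Sym2.eq_swap, h⟩
  choose fa fb hfe hfc using hedge
  set s : Finset V := w.support.tail.toFinset with hs
  set t : Finset (Sym2 V) := w.edges.toFinset with ht
  have hsupptail : ∀ x, x ∈ w.support → x ∈ w.support.tail := by
    cases w with
    | nil => exact absurd rfl hw.ne_nil
    | cons hvb p =>
      intro x hx
      rw [SimpleGraph.Walk.support_cons] at hx ⊢
      rw [List.tail_cons]
      rcases List.mem_cons.mp hx with rfl | hx
      · exact p.end_mem_support
      · exact hx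
  have hcard_t : t.card = w.length := by
    rw [ht, List.toFinset_card_of_nodup hw.edges_nodup, SimpleGraph.Walk.length_edges]
  have hcard_s : s.card = w.length := by
    rw [hs, List.toFinset_card_of_nodup hw.support_nodup, List.length_tail,
      SimpleGraph.Walk.length_support]
    omega
  have hmem_t : ∀ e, e ∈ t ↔ e ∈ w.edges := by intro e; simp [ht]
  have hmem_s : ∀ x, x ∈ s ↔ x ∈ w.support.tail := by intro x; simp [hs]
  have hF : ∀ (e : Sym2 V) (he : e ∈ t), fa e ((hmem_t e).mp he) ∈ s := by
    intro e he
    rw [hmem_s]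
    apply hsupptail
    exact w.fst_mem_support_of_mem_edges
      (hfe e ((hmem_t e).mp he) ▸ ((hmem_t _).mp he))
  have hinj : ∀ e₁ e₂ (he₁ : e₁ ∈ t) (he₂ : e₂ ∈ t),
      fa e₁ ((hmem_t e₁).mp he₁) = fa e₂ ((hmem_t e₂).mp he₂) → e₁ = e₂ := by
    intro e₁ e₂ he₁ he₂ hfa
    have h1 := hfe e₁ ((hmem_t e₁).mp he₁)
    have h2 := hfe e₂ ((hmem_t e₂).mp he₂)
    have hc1 := hfc e₁ ((hmem_t e₁).mp he₁)
    have hc2 := hfc e₂ ((hmem_t e₂).mp he₂)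
    rw [hfa] at hc1
    rw [hc2] at hc1
    rw [h1, h2, hfa, Option.some_injective _ hc1]
  have hsurj := Finset.surj_on_of_inj_on_of_card_le
    (fun e he => fa e ((hmem_t e).mp he)) hF hinj (le_of_eq (hcard_s.trans hcard_t.symm))
  have hclose : ∀ x ∈ s, ∃ y, c x = some y ∧ y ∈ s := by
    intro x hx
    obtain ⟨e, he, hxe⟩ := hsurj x hx
    refine ⟨fb e ((hmem_t e).mp he), ?_, ?_⟩
    · rw [hxe]; exact hfc e ((hmem_t e).mp he)
    · rw [hmem_s]
      apply hsupptail
      exact w.snd_mem_support_of_mem_edges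
        (hfe e ((hmem_t e).mp he) ▸ ((hmem_t _).mp he))
  have horbit : ∀ n, ∃ y ∈ s, (nx c)^[n] (some v) = some y := by
    intro n
    induction n with
    | zero =>
      refine ⟨v, ?_, rfl⟩
      rw [hmem_s]
      exact hsupptail v w.start_mem_support
    | succ n ihn =>
      obtain ⟨y, hy, hiter⟩ := ihn
      obtain ⟨z, hz, hzs⟩ := hclose y hy
      refine ⟨z, hzs, ?_⟩
      rw [Function.iterate_succ_apply', hiter, nx_some, hz]
  obtain ⟨y, _, hy⟩ := horbit (Fintype.card V)
  rw [hca v] at hy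
  cases hy

lemma reach_rt {c : V → Option V} (hc : ∀ v u, c v = some u → G.Adj v u) (hca : CAcyc c)
    (v : V) : ((Fc G c hc).spanningCoe).Reachable v (rt c v) := by
  obtain ⟨p, -, -⟩ := chain_path hc hca (Fintype.card V) v (hca v)
  exact ⟨p⟩

lemma rt_const {c : V → Option V} (hc : ∀ v u, c v = some u → G.Adj v u) (hca : CAcyc c)
    {a b : V} (h : ((Fc G c hc).spanningCoe).Reachable a b) : rt c a = rt c b := by
  obtain ⟨p⟩ := h
  induction p with
  | nil => rfl
  | cons hadj p ih =>
    rcases hadj with h1 | h1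
    · rw [rt_step hca h1, ih]
    · rw [← rt_step hca h1, ih]


lemma walk_transport {H H' : SimpleGraph V} (h : H = H') {a b : V} (p : H.Walk a b) :
    ∃ q : H'.Walk a b, q.support = p.support ∧ (p.IsPath → q.IsPath) := by
  subst h; exact ⟨p, rfl, id⟩

lemma second_vertex_eq {H : SimpleGraph V} (hH : H.IsAcyclic) {v ρ u u' : V}
    (hadj : H.Adj v u) (hadj' : H.Adj v u')
    (p : H.Walk u ρ) (hp : p.IsPath) (hv : v ∉ p.support)
    (q : H.Walk u' ρ) (hq : q.IsPath) (hv' : v ∉ q.support) : u = u' := by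
  have h1 : (⟨SimpleGraph.Walk.cons hadj p, hp.cons hv⟩ : H.Path v ρ)
      = ⟨SimpleGraph.Walk.cons hadj' q, hq.cons hv'⟩ :=
    SimpleGraph.isAcyclic_iff_path_unique.mp hH _ _
  have h2 := congrArg (fun r : H.Path v ρ => r.1.support) h1
  simp only [SimpleGraph.Walk.support_cons] at h2
  have h3 : p.support = q.support := by
    injection h2 with _ h3
  have h4 := congrArg List.head? h3
  rw [SimpleGraph.Walk.support_eq_cons p, SimpleGraph.Walk.support_eq_cons q] at h4
  simpa only [List.head?_cons, Option.some.injEq] using h4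

lemma not_mem_chain_support {c : V → Option V} {v u : V} (hca : CAcyc c)
    (hcv : c v = some u) {l : List V} (hl : ∀ w ∈ l, ∃ k, (nx c)^[k] (some u) = some w) :
    v ∉ l := by
  intro hv
  obtain ⟨k, hk⟩ := hl v hv
  have hper : (nx c)^[k+1] (some v) = some v := by
    rw [Function.iterate_succ_apply, nx_some, hcv]; exact hk
  exact no_periodic ⟨Fintype.card V, hca v⟩ (Nat.succ_pos k) hper

theorem phi_injective {c c' : V → Option V}
    (hc : ∀ v u, c v = some u → G.Adj v u) (hc' : ∀ v u, c' v = some u → G.Adj v u)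
    (hca : CAcyc c) (hca' : CAcyc c')
    (hF : Fc G c hc = Fc G c' hc') (hr : rt c = rt c') : c = c' := by
  funext v
  by_cases hnone : c v = none
  · have h2 : rt c' v = v := by
      rw [← congrFun hr v]; exact rt_eq_of_none hnone
    rw [hnone, (rt_fix_iff hca').mpr h2]
  · have hnone' : c' v ≠ none := by
      intro h
      exact hnone ((rt_fix_iff hca).mpr (by rw [congrFun hr v]; exact rt_eq_of_none h))
    obtain ⟨u, hu⟩ := Option.ne_none_iff_exists'.mp hnone
    obtain ⟨u', hu'⟩ := Option.ne_none_iff_exists'.mp hnone'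
    rw [hu, hu']
    suffices h : u = u' by rw [h]
    obtain ⟨p, hp, hps⟩ := chain_path hc hca (Fintype.card V) u (hca u)
    obtain ⟨q, hq, hqs⟩ := chain_path hc' hca' (Fintype.card V) u' (hca' u')
    have hS : (Fc G c' hc').spanningCoe = (Fc G c hc).spanningCoe := by rw [hF]
    obtain ⟨q', hq's, hq'p⟩ := walk_transport hS q
    have hend : rt c' u' = rt c u := by
      rw [← rt_step hca' hu', ← congrFun hr v, rt_step hca hu]
    have hadj : ((Fc G c hc).spanningCoe).Adj v u := Or.inl hu
    have hadj' : ((Fc G c hc).spanningCoe).Adj v u' :=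
      hS ▸ (Or.inl hu' : ((Fc G c' hc').spanningCoe).Adj v u')
    exact second_vertex_eq (Fc_acyclic hc hca) hadj hadj'
      p hp (not_mem_chain_support hca hu hps)
      (q'.copy rfl hend) (by rw [SimpleGraph.Walk.isPath_copy]; exact hq'p hq)
      (by rw [SimpleGraph.Walk.support_copy, hq's]; exact not_mem_chain_support hca' hu' hqs)


open SimpleGraph.Walk in
theorem surj_aux (F : G.Subgraph) (r : V → V) (hsp : F.IsSpanning)
    (hac : F.spanningCoe.IsAcyclic) (hre : ∀ v, F.spanningCoe.Reachable v (r v))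
    (hcon : ∀ u v, F.spanningCoe.Reachable u v → r u = r v) :
    ∃ (c : V → Option V) (hcG : ∀ v u, c v = some u → G.Adj v u),
      CAcyc c ∧ Fc G c hcG = F ∧ rt c = r := by
  classical
  set H := F.spanningCoe with hHdef
  have hpu : ∀ ⦃a b : V⦄ (p q : H.Path a b), p = q :=
    SimpleGraph.isAcyclic_iff_path_unique.mp hac
  let pw : ∀ v : V, H.Path v (r v) := fun v => ((hre v).some).toPath
  let c : V → Option V := fun v => if v = r v then none else some ((pw v).1.getVert 1)
  have hcnone : ∀ v, v = r v → c v = none := fun v hv => if_pos hv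
  have hcsome : ∀ v, v ≠ r v → c v = some ((pw v).1.getVert 1) := fun v hv => if_neg hv
  have hlen : ∀ v, v ≠ r v → 0 < (pw v).1.length := by
    intro v hv
    rcases Nat.eq_zero_or_pos (pw v).1.length with h0 | h
    · exact absurd (eq_of_length_eq_zero h0) hv
    · exact h
  have hadjnext : ∀ v, v ≠ r v → H.Adj v ((pw v).1.getVert 1) := by
    intro v hv
    have := (pw v).1.adj_getVert_succ (hlen v hv)
    rwa [getVert_zero] at this
  have hc : ∀ v u, c v = some u → H.Adj v u := by
    intro v u hcv
    by_cases hv : v = r v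
    · rw [hcnone v hv] at hcv; cases hcv
    · rw [hcsome v hv] at hcv
      rw [← Option.some_injective _ hcv]
      exact hadjnext v hv
  have hcG : ∀ v u, c v = some u → G.Adj v u := fun v u h => F.adj_sub (hc v u h)
  have hrstep : ∀ v u, c v = some u → r u = r v := fun v u h =>
    hcon u v (hc v u h).symm.reachable
  have hdec : ∀ v, v ≠ r v → (pw ((pw v).1.getVert 1)).1.length < (pw v).1.length := by
    intro v hv
    set u := (pw v).1.getVert 1 with hu
    have hmem : u ∈ (pw v).1.support := Walk.getVert_mem_support' _ 1
    have hq : ((pw v).1.dropUntil u hmem).IsPath := (pw v).2.dropUntil hmem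
    have hru : r u = r v := hrstep v u (hcsome v hv)
    have hq' : (((pw v).1.dropUntil u hmem).copy rfl hru.symm).IsPath := by
      rw [isPath_copy]; exact hq
    have hequ : pw u = ⟨((pw v).1.dropUntil u hmem).copy rfl hru.symm, hq'⟩ := hpu _ _
    have hlq : (pw u).1.length = ((pw v).1.dropUntil u hmem).length := by
      rw [hequ]
      simp
    have hsplit := congrArg SimpleGraph.Walk.length ((pw v).1.take_spec hmem)
    rw [length_append] at hsplit
    have htake : 0 < ((pw v).1.takeUntil u hmem).length := by
      rcases Nat.eq_zero_or_pos ((pw v).1.takeUntil u hmem).length with h0 | h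
      · exact absurd (eq_of_length_eq_zero h0) (hadjnext v hv).ne
      · exact h
    omega
  have hacyc : Acyc c := by
    suffices h : ∀ (m : ℕ) (v : V), (pw v).1.length ≤ m → ∃ n, (nx c)^[n] (some v) = none by
      exact fun v => h _ v le_rfl
    intro m
    induction m with
    | zero =>
      intro v hv
      have hveq : v = r v := eq_of_length_eq_zero (Nat.le_zero.mp hv)
      exact ⟨1, by simp [hcnone v hveq]⟩
    | succ m ih =>
      intro v hv
      by_cases hveq : v = r v
      · exact ⟨1, by simp [hcnone v hveq]⟩
      · obtain ⟨n, hn⟩ := ih ((pw v).1.getVert 1) (by have := hdec v hveq; omega)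
        refine ⟨n+1, ?_⟩
        rw [Function.iterate_succ_apply, nx_some, hcsome v hveq]
        exact hn
  have hcac : CAcyc c := acyc_iff_cacyc.mp hacyc
  have hrt : ∀ v, rt c v = r v := by
    suffices h : ∀ (m : ℕ) (v : V), (pw v).1.length ≤ m → rt c v = r v by
      exact fun v => h _ v le_rfl
    intro m
    induction m with
    | zero =>
      intro v hv
      have hveq : v = r v := eq_of_length_eq_zero (Nat.le_zero.mp hv)
      rw [rt_eq_of_none (hcnone v hveq)]; exact hveq
    | succ m ih =>
      intro v hv
      by_cases hveq : v = r v
      · rw [rt_eq_of_none (hcnone v hveq)]; exact hveq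
      · rw [rt_step hcac (hcsome v hveq), ih _ (by have := hdec v hveq; omega),
          hrstep v _ (hcsome v hveq)]
  have hFc : Fc G c hcG = F := by
    apply SimpleGraph.Subgraph.ext
    · exact (Set.eq_univ_of_forall hsp).symm
    · funext a b
      rw [eq_iff_iff]
      constructor
      · rintro (h | h)
        · exact hc a b h
        · exact (hc b a h).symm
      · intro hFab
        have hab : H.Adj a b := hFab
        have hrab : r a = r b := hcon a b hab.reachable
        have hne : a ≠ b := hab.ne
        by_cases hbr : b = r b
        · left
          have hrb : r a = b := by rw [hrab, ← hbr]
          have har : a ≠ r a := fun h => hne (h.trans hrb)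
          have heWp : ((SimpleGraph.Walk.cons hab SimpleGraph.Walk.nil).copy rfl hrb.symm
              : H.Walk a (r a)).IsPath := by
            rw [isPath_copy]
            simp [hne]
          have hequ : pw a = ⟨(SimpleGraph.Walk.cons hab SimpleGraph.Walk.nil).copy rfl
              hrb.symm, heWp⟩ := hpu _ _
          rw [hcsome a har, hequ]
          simp [getVert_copy]
        · by_cases har : a = r a
          · right
            have hra : r b = a := by rw [← hrab, ← har]
            have hbr' : b ≠ r b := hbr
            have heWp : ((SimpleGraph.Walk.cons hab.symm SimpleGraph.Walk.nil).copy rfl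
                hra.symm : H.Walk b (r b)).IsPath := by
              rw [isPath_copy]
              simp [hne.symm]
            have hequ : pw b = ⟨(SimpleGraph.Walk.cons hab.symm SimpleGraph.Walk.nil).copy rfl
                hra.symm, heWp⟩ := hpu _ _
            rw [hcsome b hbr', hequ]
            simp [getVert_copy]
          · by_cases hmem : a ∈ (pw b).1.support
            · right
              have htu : ((pw b).1.takeUntil a hmem).IsPath := (pw b).2.takeUntil hmem
              have heW : (SimpleGraph.Walk.cons hab.symm SimpleGraph.Walk.nil
                  : H.Walk b a).IsPath := by simp [hne.symm]
              have hequ : (⟨(pw b).1.takeUntil a hmem, htu⟩ : H.Path b a)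
                  = ⟨SimpleGraph.Walk.cons hab.symm SimpleGraph.Walk.nil, heW⟩ := hpu _ _
              have hlen1 : ((pw b).1.takeUntil a hmem).length = 1 := by
                rw [show (pw b).1.takeUntil a hmem
                  = SimpleGraph.Walk.cons hab.symm SimpleGraph.Walk.nil
                  from congrArg Subtype.val hequ]
                simp
              have hgv : (pw b).1.getVert 1 = a := by
                conv_lhs => rw [← (pw b).1.take_spec hmem]
                rw [getVert_append, hlen1]
                simp
              rw [hcsome b hbr, hgv]
            · left
              have hW : ((SimpleGraph.Walk.cons hab (pw b).1).copy rfl hrab.symm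
                  : H.Walk a (r a)).IsPath := by
                rw [isPath_copy]
                exact (pw b).2.cons hmem
              have hequ : pw a = ⟨(SimpleGraph.Walk.cons hab (pw b).1).copy rfl hrab.symm,
                  hW⟩ := hpu _ _
              rw [hcsome a har, hequ]
              simp [getVert_copy]
  exact ⟨c, hcG, hcac, hFc, funext hrt⟩


theorem step_b :
    Nat.card {c : V → Option V // (∀ v u, c v = some u → G.Adj v u) ∧ Acyc c}
      = Nat.card {p : G.Subgraph × (V → V) //
          p.1.IsSpanning ∧ p.1.spanningCoe.IsAcyclic ∧
          (∀ v, p.1.spanningCoe.Reachable v (p.2 v)) ∧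
          ∀ u v, p.1.spanningCoe.Reachable u v → p.2 u = p.2 v} := by
  apply Nat.card_eq_of_bijective (fun x => ⟨(Fc G x.1 x.2.1, rt x.1),
      fun v => Set.mem_univ v,
      Fc_acyclic x.2.1 (acyc_iff_cacyc.mp x.2.2),
      fun v => reach_rt x.2.1 (acyc_iff_cacyc.mp x.2.2) v,
      fun u v h => rt_const x.2.1 (acyc_iff_cacyc.mp x.2.2) h⟩)
  constructor
  · rintro ⟨c, hc, hac⟩ ⟨c', hc', hac'⟩ h
    have hval := congrArg Subtype.val h
    have hF : Fc G c hc = Fc G c' hc' := congrArg Prod.fst hval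
    have hr : rt c = rt c' := congrArg Prod.snd hval
    exact Subtype.ext
      (phi_injective hc hc' (acyc_iff_cacyc.mp hac) (acyc_iff_cacyc.mp hac') hF hr)
  · rintro ⟨⟨F, r⟩, hsp, hacy, hre, hcon⟩
    obtain ⟨c, hcG, hcac, hFc, hrt⟩ := surj_aux F r hsp hacy hre hcon
    refine ⟨⟨c, hcG, acyc_iff_cacyc.mpr hcac⟩, ?_⟩
    apply Subtype.ext
    show (Fc G c hcG, rt c) = (F, r)
    rw [hFc, hrt]

end RSF

open SimpleGraph

/-- The number of rooted spanning forests of a graph `G`: pairs `(F, r)` where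
`F` is a spanning acyclic subgraph of `G` and `r` assigns to each vertex the
root of its connected component in `F` (so `r` is constant on components and
`r v` lies in the component of `v`). -/
noncomputable def numRootedSpanningForests {V : Type*} [Fintype V] (G : SimpleGraph V) : ℕ :=
  Nat.card {p : G.Subgraph × (V → V) //
    p.1.IsSpanning ∧ p.1.spanningCoe.IsAcyclic ∧
    (∀ v, p.1.spanningCoe.Reachable v (p.2 v)) ∧
    ∀ u v, p.1.spanningCoe.Reachable u v → p.2 u = p.2 v}

/-- For a finite simple graph `G` with Laplacian `L`, `det (I + L)` equals the
number of rooted spanning forests of `G`. -/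
theorem det_one_add_lapMatrix_eq_numRootedSpanningForests
    {V : Type*} [Fintype V] [DecidableEq V]
    (G : SimpleGraph V) [DecidableRel G.Adj] :
    (1 + G.lapMatrix ℤ).det = numRootedSpanningForests G := by
  rw [RSF.step_a_final, RSF.step_b, numRootedSpanningForests]
end

section
/- The number of rooted spanning forests of the cycle graph C_n (the circulant graph C_n(1)) equals 2·T_n(3/2) - 2, where T_n is the n-th Chebyshev polynomial of the first kind. -/
open SimpleGraph Polynomial

/-- The cycle graph `C_n` as the circulant graph `C_n(1)` on `ZMod n`. -/
def cycleCirculant (n : ℕ) : SimpleGraph (ZMod n) :=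
  SimpleGraph.fromRel fun i j => j - i = 1

open Finset

namespace RSFAux


abbrev S := Option Bool

def Ok (a b : S) : Prop := ¬(a = some true ∧ b = some false)

instance (a b : S) : Decidable (Ok a b) := by unfold Ok; infer_instance

def P : ℕ → S → S → ℕ
  | 0, s, t => if s = t then 1 else 0
  | (m+1), s, t => ∑ u : S, if Ok s u then P m u t else 0

lemma sum_S (f : S → ℕ) : ∑ u : S, f u = f none + (f (some true) + f (some false)) := by
  simp [univ_option, Fintype.sum_bool]

lemma P_succ_none (m : ℕ) (t : S) :
    P (m+1) none t = P m none t + (P m (some true) t + P m (some false) t) := by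
  rw [P, sum_S]; simp [Ok]

lemma P_succ_false (m : ℕ) (t : S) :
    P (m+1) (some false) t = P m none t + (P m (some true) t + P m (some false) t) := by
  rw [P, sum_S]; simp [Ok]

lemma P_succ_true (m : ℕ) (t : S) :
    P (m+1) (some true) t = P m none t + P m (some true) t := by
  rw [P, sum_S]; simp [Ok]

lemma P_rec (m : ℕ) (s t : S) :
    (P (m+3) s t : ℤ) = 3 * P (m+2) s t - P (m+1) s t := by
  match s with
  | none =>
    simp only [show m+3 = (m+1)+1+1 from rfl, show m+2 = (m+1)+1 from rfl,
      P_succ_none, P_succ_false, P_succ_true]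
    push_cast; ring
  | some false =>
    simp only [show m+3 = (m+1)+1+1 from rfl, show m+2 = (m+1)+1 from rfl,
      P_succ_none, P_succ_false, P_succ_true]
    push_cast; ring
  | some true =>
    simp only [show m+3 = (m+1)+1+1 from rfl, show m+2 = (m+1)+1 from rfl,
      P_succ_none, P_succ_false, P_succ_true]
    push_cast; ring

/-- number of cyclic sequences of length `m+1` (as counted via paths). -/
def Lnum (m : ℕ) : ℕ := ∑ s : S, ∑ t : S, if Ok t s then P m s t else 0

lemma Lnum_rec (m : ℕ) : (Lnum (m+3) : ℤ) = 3 * Lnum (m+2) - Lnum (m+1) := by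
  unfold Lnum
  simp only [sum_S]
  simp only [Ok]
  push_cast
  simp only [P_rec]
  norm_num
  rw [P_rec]
  ring

lemma Lnum_one : Lnum 1 = 7 := by decide
lemma Lnum_two : Lnum 2 = 18 := by decide




def chainP (m : ℕ) (g : Fin (m+1) → S) : Prop := ∀ i : Fin m, Ok (g i.castSucc) (g i.succ)

instance (m : ℕ) : DecidablePred (chainP m) := fun _ => by unfold chainP; infer_instance

def Aset (m : ℕ) (s t : S) : Finset (Fin (m+1) → S) :=
  univ.filter (fun g => g 0 = s ∧ chainP m g ∧ g (Fin.last m) = t)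

lemma card_Aset (m : ℕ) (s t : S) : (Aset m s t).card = P m s t := by
  induction m generalizing s with
  | zero =>
    rcases eq_or_ne s t with rfl | hst
    · rw [P, if_pos rfl]
      apply Finset.card_eq_one.mpr
      refine ⟨fun _ => s, ?_⟩
      ext g
      simp only [Aset, mem_filter, mem_univ, true_and, mem_singleton]
      constructor
      · rintro ⟨h0, -, -⟩
        funext i
        have hi : i = 0 := by
          apply Fin.ext
          have := i.isLt
          simp only [Fin.val_zero]
          omega
        rw [hi, h0]
      · rintro rfl
        exact ⟨rfl, fun i => i.elim0, rfl⟩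
    · rw [P, if_neg hst]
      apply Finset.card_eq_zero.mpr
      ext g
      simp only [Aset, mem_filter, mem_univ, true_and, notMem_empty, iff_false, not_and]
      intro h0 _ hlast
      have hl0 : (Fin.last 0) = (0 : Fin 1) := by
        apply Fin.ext
        simp
      rw [hl0] at hlast
      exact absurd (by rw [← h0, ← hlast]) hst
  | succ m ih =>
    rw [P]
    rw [Finset.card_eq_sum_card_fiberwise (f := fun g => g 1) (t := univ)
      (fun g _ => mem_univ _)]
    refine Finset.sum_congr rfl (fun u _ => ?_)
    by_cases hu : Ok s u
    · rw [if_pos hu, ← ih u]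
      refine Finset.card_nbij' (fun g => g ∘ Fin.succ) (fun h => Fin.cons s h) ?_ ?_ ?_ ?_
      · intro g hg
        simp only [Aset, mem_coe, mem_filter, mem_univ, true_and] at hg ⊢
        obtain ⟨⟨h0, hch, hlast⟩, h1⟩ := hg
        refine ⟨h1, ?_, ?_⟩
        · intro i
          have := hch i.succ
          rwa [← Fin.succ_castSucc] at this
        · show g (Fin.last m).succ = t
          rwa [Fin.succ_last]
      · intro h hh
        simp only [Aset, mem_coe, mem_filter, mem_univ, true_and] at hh ⊢
        obtain ⟨h0, hch, hlast⟩ := hh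
        refine ⟨⟨Fin.cons_zero _ _, ?_, ?_⟩, ?_⟩
        · intro i
          induction i using Fin.cases with
          | zero =>
            simpa [Fin.castSucc_zero, Fin.cons_zero, Fin.cons_succ, h0] using hu
          | succ j =>
            rw [← Fin.succ_castSucc, Fin.cons_succ, Fin.cons_succ]
            exact hch j
        · rw [← Fin.succ_last, Fin.cons_succ]
          exact hlast
        · rw [show (1 : Fin (m+2)) = Fin.succ 0 from rfl, Fin.cons_succ, h0]
      · intro g hg
        simp only [Aset, mem_coe, mem_filter, mem_univ, true_and] at hg
        obtain ⟨⟨h0, -, -⟩, -⟩ := hg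
        conv_lhs => rw [← h0]
        exact Fin.cons_self_tail g
      · intro h _
        funext i
        simp [Fin.cons_succ]
    · rw [if_neg hu]
      apply Finset.card_eq_zero.mpr
      ext g
      simp only [Aset, mem_filter, mem_univ, true_and, notMem_empty, iff_false, not_and]
      rintro ⟨h0, hch, -⟩ h1
      have := hch 0
      rw [Fin.castSucc_zero, h0] at this
      exact absurd (by rwa [show (Fin.succ 0 : Fin (m+2)) = 1 from rfl, h1] at this) (by exact fun hh => hu hh)

lemma card_cyc (m : ℕ) :
    (univ.filter (fun σ : ZMod (m+1) → S => ∀ i, Ok (σ i) (σ (i+1)))).card = Lnum m := by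
  classical
  have hcast : ∀ k : ℕ, k < m + 1 → ((k : ZMod (m+1))).val = k := fun k hk => ZMod.val_cast_of_lt hk
  -- step 1 : transfer to Fin (m+1)
  have step1 : (univ.filter (fun σ : ZMod (m+1) → S => ∀ i, Ok (σ i) (σ (i+1)))).card
      = (univ.filter (fun g : Fin (m+1) → S =>
          chainP m g ∧ Ok (g (Fin.last m)) (g 0))).card := by
    refine Finset.card_nbij' (fun σ => fun k : Fin (m+1) => σ (k.val : ZMod (m+1)))
      (fun g => fun i : ZMod (m+1) => g ⟨i.val, ZMod.val_lt i⟩) ?_ ?_ ?_ ?_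
    · intro σ hσ
      simp only [mem_coe, mem_filter, mem_univ, true_and] at hσ ⊢
      constructor
      · intro i
        show Ok (σ ((i.castSucc.val : ℕ) : ZMod (m+1))) (σ ((i.succ.val : ℕ) : ZMod (m+1)))
        have h1 : ((i.succ.val : ℕ) : ZMod (m+1)) = (i.castSucc.val : ℕ) + 1 := by
          rw [Fin.val_succ, Fin.coe_castSucc]
          push_cast
          ring
        rw [h1]
        exact hσ _
      · show Ok (σ (((Fin.last m).val : ℕ) : ZMod (m+1))) (σ (((0 : Fin (m+1)).val : ℕ) : ZMod (m+1)))
        have h0 : (((0 : Fin (m+1)).val : ℕ) : ZMod (m+1)) = 0 := by norm_num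
        have hl : (((Fin.last m).val : ℕ) : ZMod (m+1)) = (m : ZMod (m+1)) := by
          rw [Fin.val_last]
        rw [h0, hl]
        have := hσ (m : ZMod (m+1))
        have hwrap : ((m : ZMod (m+1)) + 1) = 0 := by
          rw [show ((m : ZMod (m+1)) + 1) = ((m+1 : ℕ) : ZMod (m+1)) from by push_cast; ring,
            ZMod.natCast_self]
        rwa [hwrap] at this
    · intro g hg
      simp only [mem_coe, mem_filter, mem_univ, true_and] at hg ⊢
      obtain ⟨hch, hwrap⟩ := hg
      intro i
      rcases Nat.lt_or_ge i.val m with hk | hk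
      · have hsucc : ((i + 1 : ZMod (m+1))).val = i.val + 1 := by
          have : (i + 1 : ZMod (m+1)) = ((i.val + 1 : ℕ) : ZMod (m+1)) := by
            push_cast [ZMod.natCast_zmod_val]; ring
          rw [this, hcast _ (by omega)]
        have e1 : (⟨(i + 1 : ZMod (m+1)).val, ZMod.val_lt _⟩ : Fin (m+1))
            = Fin.succ ⟨i.val, by omega⟩ := by
          apply Fin.ext; simp [hsucc]
        have e2 : (⟨i.val, ZMod.val_lt i⟩ : Fin (m+1))
            = Fin.castSucc ⟨i.val, by omega⟩ := by
          apply Fin.ext; simp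
        rw [e1, e2]
        exact hch _
      · have him : i.val = m := by have := ZMod.val_lt i; omega
        have hi0 : i + 1 = 0 := by
          have hh : i = ((m : ℕ) : ZMod (m+1)) := by
            rw [← ZMod.natCast_zmod_val i, him]
          rw [hh, show ((m : ZMod (m+1)) + 1) = ((m+1 : ℕ) : ZMod (m+1)) from by push_cast; ring,
            ZMod.natCast_self]
        have e1 : (⟨i.val, ZMod.val_lt i⟩ : Fin (m+1)) = Fin.last m := by
          apply Fin.ext; simp [him]
        have e2 : (⟨(i + 1 : ZMod (m+1)).val, ZMod.val_lt _⟩ : Fin (m+1)) = 0 := by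
          apply Fin.ext; simp [hi0]
        rw [e1, e2]
        exact hwrap
    · intro σ _
      funext x
      simp only
      rw [ZMod.natCast_zmod_val]
    · intro g _
      funext k
      simp only
      congr 1
      apply Fin.ext
      simp [hcast _ k.isLt]
  rw [step1]
  -- step 2 : fiberwise over (g 0, g last)
  rw [Finset.card_eq_sum_card_fiberwise (f := fun g => ((g 0 : S), g (Fin.last m)))
    (t := univ) (fun g _ => mem_univ _)]
  rw [Fintype.sum_prod_type]
  unfold Lnum
  refine Finset.sum_congr rfl (fun s _ => Finset.sum_congr rfl (fun t _ => ?_))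
  by_cases hOk : Ok t s
  · rw [if_pos hOk, ← card_Aset m s t]
    congr 1
    ext g
    simp only [Aset, mem_filter, mem_univ, true_and, Prod.mk.injEq]
    constructor
    · rintro ⟨⟨hch, hwrap⟩, h0, hlast⟩
      exact ⟨h0, hch, hlast⟩
    · rintro ⟨h0, hch, hlast⟩
      refine ⟨⟨hch, ?_⟩, h0, hlast⟩
      rw [h0, hlast]
      exact hOk
  · rw [if_neg hOk]
    apply Finset.card_eq_zero.mpr
    rw [Finset.filter_eq_empty_iff]
    intro g hg
    simp only [mem_filter, mem_univ, true_and] at hg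
    obtain ⟨hch, hwrap⟩ := hg
    intro hpair
    rw [Prod.mk.injEq] at hpair
    rw [hpair.1, hpair.2] at hwrap
    exact hOk hwrap




lemma cheb_pair (k : ℕ) :
    ((Lnum (k+1) : ℝ)) = 2 * (Chebyshev.T ℝ ((k : ℤ) + 2)).eval (3/2 : ℝ)
      ∧ ((Lnum (k+2) : ℝ)) = 2 * (Chebyshev.T ℝ ((k : ℤ) + 3)).eval (3/2 : ℝ) := by
  induction k with
  | zero =>
    constructor
    · rw [Lnum_one]
      norm_num [Chebyshev.T_two]
    · rw [Lnum_two]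
      have h3 : Chebyshev.T ℝ (((0:ℕ) : ℤ) + 3) = 2 * X * Chebyshev.T ℝ 2 - Chebyshev.T ℝ 1 := by
        have := Chebyshev.T_add_two ℝ 1
        norm_num at this ⊢
        exact this
      rw [h3]
      simp [Chebyshev.T_two, Chebyshev.T_one]
      norm_num
  | succ k ih =>
    refine ⟨by exact_mod_cast ih.2, ?_⟩
    have hrec : (Lnum (k+3) : ℝ) = 3 * Lnum (k+2) - Lnum (k+1) := by
      exact_mod_cast Lnum_rec k
    have hT : Chebyshev.T ℝ ((k : ℤ) + 4) =
        2 * X * Chebyshev.T ℝ ((k : ℤ) + 3) - Chebyshev.T ℝ ((k : ℤ) + 2) := by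
      have := Chebyshev.T_add_two ℝ ((k : ℤ) + 2)
      convert this using 2 <;> ring_nf
    have e1 : ((k+1 : ℕ) : ℤ) + 3 = (k : ℤ) + 4 := by push_cast; ring
    have e2 : (k : ℕ) + 1 + 2 = k + 3 := by ring
    rw [e1, e2, hrec, hT, ih.1, ih.2]
    simp [eval_mul, eval_sub]
    ring



variable {n : ℕ}

section ZModHelp
variable [NeZero n]

lemma natCast_ne_zero_zmod {k : ℕ} (h1 : 1 ≤ k) (h2 : k < n) : (k : ZMod n) ≠ 0 := by
  intro h
  have := (ZMod.natCast_eq_zero_iff k n).mp h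
  have := Nat.le_of_dvd (by omega) this
  omega

lemma one_ne_zero_zmod (hn : 2 ≤ n) : (1 : ZMod n) ≠ 0 := by
  have := natCast_ne_zero_zmod (n := n) (k := 1) le_rfl (by omega)
  simpa using this

lemma val_one_zmod (hn : 2 ≤ n) : (1 : ZMod n).val = 1 := by
  have : ((1 : ℕ) : ZMod n).val = 1 := ZMod.val_cast_of_lt (by omega)
  simpa using this

lemma val_pos_of_ne {u v : ZMod n} (h : u ≠ v) : 1 ≤ (v - u).val := by
  rcases Nat.eq_zero_or_pos (v - u).val with h0 | h1
  · exfalso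
    have hvu : v - u = 0 := by
      have := ZMod.natCast_zmod_val (v - u)
      rw [h0] at this
      simpa using this.symm
    exact h (sub_eq_zero.mp hvu).symm
  · exact h1

lemma val_add_val_eq_n {u v : ZMod n} (h : u ≠ v) : (v - u).val + (u - v).val = n := by
  have h1 : 1 ≤ (v - u).val := val_pos_of_ne h
  have h2 : 1 ≤ (u - v).val := val_pos_of_ne (Ne.symm h)
  have hlt1 : (v - u).val < n := ZMod.val_lt _
  have hlt2 : (u - v).val < n := ZMod.val_lt _
  have hsum : (((v - u).val + (u - v).val : ℕ) : ZMod n) = 0 := by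
    push_cast [ZMod.natCast_zmod_val]
    ring
  have hdvd := (ZMod.natCast_eq_zero_iff _ n).mp hsum
  have hle := Nat.le_of_dvd (by omega) hdvd
  rcases hdvd with ⟨c, hc⟩
  have hn0 : 0 < n := Nat.pos_of_ne_zero (NeZero.ne n)
  have hc0 : c ≠ 0 := by rintro rfl; omega
  have hc2 : c < 2 := by
    by_contra hge
    push_neg at hge
    have : 2 * n ≤ n * c := by nlinarith
    omega
  have hc1 : c = 1 := by omega
  rw [hc1, mul_one] at hc
  omega

lemma val_sub_one {w : ZMod n} (hw : w ≠ 0) : (w - 1).val = w.val - 1 := by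
  have h1 : 1 ≤ w.val := by
    rcases Nat.eq_zero_or_pos w.val with h0 | h1
    · exact absurd (by rw [← ZMod.natCast_zmod_val w, h0]; simp) hw
    · exact h1
  have : w - 1 = (((w.val - 1 : ℕ)) : ZMod n) := by
    rw [Nat.cast_sub h1, ZMod.natCast_zmod_val]
    simp
  rw [this, ZMod.val_cast_of_lt]
  have := ZMod.val_lt w
  omega

lemma val_neg_one_zmod (hn : 2 ≤ n) : (-1 : ZMod n).val = n - 1 := by
  have : (-1 : ZMod n) = (((n - 1 : ℕ)) : ZMod n) := by
    have : ((n : ℕ) : ZMod n) = 0 := ZMod.natCast_self n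
    rw [Nat.cast_sub (by omega)]
    rw [this]
    simp
  rw [this, ZMod.val_cast_of_lt (by omega)]

end ZModHelp

section Graph
variable [NeZero n]

lemma cyc_adj {i j : ZMod n} :
    (cycleCirculant n).Adj i j ↔ i ≠ j ∧ (j - i = 1 ∨ i - j = 1) := by
  simp [cycleCirculant]

lemma adj_succ (hn : 3 ≤ n) (i : ZMod n) : (cycleCirculant n).Adj i (i + 1) := by
  rw [cyc_adj]
  refine ⟨?_, Or.inl (by ring)⟩
  intro h
  have : (1 : ZMod n) = 0 := by
    have := congrArg (fun x => x - i) h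
    simpa using this.symm
  exact one_ne_zero_zmod (by omega) this

lemma adj_cases {i j : ZMod n} (h : (cycleCirculant n).Adj i j) : j = i + 1 ∨ i = j + 1 := by
  rw [cyc_adj] at h
  rcases h.2 with h1 | h1
  · left; linear_combination h1
  · right; linear_combination h1

variable {K : SimpleGraph (ZMod n)}

/-- there is a chain of `a` present up-edges starting at `u`. -/
def ArcFrom (K : SimpleGraph (ZMod n)) (u : ZMod n) (a : ℕ) : Prop :=
  ∀ j : ℕ, j < a → K.Adj (u + j) (u + j + 1)

def UpArc (K : SimpleGraph (ZMod n)) (u v : ZMod n) : Prop := ArcFrom K u (v - u).val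

lemma arcFrom_mono {u : ZMod n} {a b : ℕ} (hab : a ≤ b) (h : ArcFrom K u b) : ArcFrom K u a :=
  fun j hj => h j (lt_of_lt_of_le hj hab)

lemma arcFrom_shift {u : ZMod n} {a : ℕ} (h : ArcFrom K u (a + 1)) : ArcFrom K (u + 1) a := by
  intro j hj
  have e : u + 1 + (j : ZMod n) = u + ((j + 1 : ℕ) : ZMod n) := by push_cast; ring
  rw [e]
  exact h (j + 1) (by omega)

lemma reach_of_arcFrom {u : ZMod n} (a : ℕ) (h : ArcFrom K u a) : K.Reachable u (u + a) := by
  induction a with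
  | zero =>
    rw [Nat.cast_zero, add_zero]
  | succ a ih =>
    have h1 : K.Reachable u (u + a) := ih (arcFrom_mono (by omega) h)
    have h2 : K.Adj (u + a) (u + a + 1) := h a (by omega)
    have e : u + ((a + 1 : ℕ) : ZMod n) = u + a + 1 := by push_cast; ring
    rw [e]
    exact h1.trans h2.reachable

lemma reach_of_upArc {u v : ZMod n} (h : UpArc K u v) : K.Reachable u v := by
  have := reach_of_arcFrom _ h
  rwa [ZMod.natCast_zmod_val, add_sub_cancel] at this

end Graph

section Graph2
variable [NeZero n] {K : SimpleGraph (ZMod n)}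

lemma upArc_of_eq_add {u v : ZMod n} {a : ℕ} (ha : a < n) (hv : v = u + (a : ZMod n))
    (h : ArcFrom K u a) : UpArc K u v := by
  have hval : (v - u).val = a := by
    have : v - u = (a : ZMod n) := by rw [hv]; ring
    rw [this, ZMod.val_cast_of_lt ha]
  rw [UpArc, hval]
  exact h

lemma upArc_elim {u v : ZMod n} (h : UpArc K u v) :
    v = u + (((v - u).val : ℕ) : ZMod n) ∧ ArcFrom K u (v - u).val := by
  refine ⟨?_, h⟩
  rw [ZMod.natCast_zmod_val]
  ring

lemma upArc_elim' {u v : ZMod n} (h : UpArc K u v) :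
    ∃ a : ℕ, a < n ∧ v = u + (a : ZMod n) ∧ ArcFrom K u a :=
  ⟨(v - u).val, ZMod.val_lt _, (upArc_elim h).1, h⟩

lemma rel_step (hn : 3 ≤ n) {u x v : ZMod n} (hux : K.Adj u x) (hK : K ≤ cycleCirculant n)
    (h : x = v ∨ UpArc K x v ∨ UpArc K v x) :
    u = v ∨ UpArc K u v ∨ UpArc K v u := by
  by_cases huv : u = v
  · exact Or.inl huv
  rcases adj_cases (hK hux) with hx | hx
  · -- x = u + 1
    have hedge : K.Adj u (u + 1) := by rwa [hx] at hux
    have harc1 : ArcFrom K u 1 := by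
      intro j hj
      have hj0 : j = 0 := by omega
      subst hj0
      simpa using hedge
    rcases h with hv | hup | hdown
    · -- v = u + 1
      right; left
      refine upArc_of_eq_add (a := 1) (by omega) ?_ harc1
      rw [← hv, hx]; simp
    · -- UpArc (u+1) v
      obtain ⟨a, haln, hxa, harc⟩ := upArc_elim' hup
      rcases Nat.lt_or_ge (a + 1) n with h1 | h1
      · right; left
        refine upArc_of_eq_add (a := a + 1) h1 ?_ ?_
        · rw [hxa, hx]; push_cast; ring
        · intro j hj
          rcases Nat.eq_zero_or_pos j with rfl | hjpos
          · simpa using hedge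
          · obtain ⟨j', rfl⟩ := Nat.exists_eq_succ_of_ne_zero (n := j) (by omega)
            have := harc j' (by omega)
            rw [hx] at this
            have e : u + ((j' + 1 : ℕ) : ZMod n) = u + 1 + (j' : ZMod n) := by push_cast; ring
            rw [e]
            exact this
      · exfalso
        apply huv
        have han : a + 1 = n := by omega
        have hv : v = u + (((a + 1 : ℕ)) : ZMod n) := by rw [hxa, hx]; push_cast; ring
        rw [han, ZMod.natCast_self, add_zero] at hv
        exact hv.symm
    · -- UpArc v (u+1)
      obtain ⟨a, haln, hxa, harc⟩ := upArc_elim' hdown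
      rcases Nat.eq_zero_or_pos a with ha0 | hapos
      · -- x = v
        subst ha0
        simp only [Nat.cast_zero, add_zero] at hxa
        right; left
        refine upArc_of_eq_add (a := 1) (by omega) ?_ harc1
        rw [← hxa, hx]; simp
      · obtain ⟨a', rfl⟩ := Nat.exists_eq_succ_of_ne_zero (n := a) (by omega)
        rcases Nat.eq_zero_or_pos a' with ha'0 | ha'pos
        · -- a = 1 : u = v contradiction
          exfalso
          apply huv
          subst ha'0
          have h2 : x = v + 1 := by simpa using hxa
          have h3 : u + 1 = v + 1 := by rw [← hx, h2]
          exact add_right_cancel h3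
        · right; right
          refine upArc_of_eq_add (a := a') (by omega) ?_ (arcFrom_mono (by omega) harc)
          rw [hx] at hxa
          push_cast at hxa ⊢
          linear_combination hxa
  · -- u = x + 1
    have hedge : K.Adj x (x + 1) := by
      have h2 := hux.symm
      rwa [hx] at h2
    rcases h with hv | hup | hdown
    · -- x = v, u = v + 1
      right; right
      refine upArc_of_eq_add (a := 1) (by omega) (by rw [← hv, hx]; simp) ?_
      intro j hj
      have hj0 : j = 0 := by omega
      subst hj0
      rw [← hv]
      simpa using hedge
    · -- UpArc x v
      obtain ⟨a, haln, hxa, harc⟩ := upArc_elim' hup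
      rcases Nat.eq_zero_or_pos a with ha0 | hapos
      · -- x = v : u = v + 1
        subst ha0
        simp only [Nat.cast_zero, add_zero] at hxa
        right; right
        refine upArc_of_eq_add (a := 1) (by omega) (by rw [hxa, hx]; simp) ?_
        intro j hj
        have hj0 : j = 0 := by omega
        subst hj0
        rw [hxa]
        simpa using hedge
      · obtain ⟨a', rfl⟩ := Nat.exists_eq_succ_of_ne_zero (n := a) (by omega)
        rcases Nat.eq_zero_or_pos a' with ha'0 | ha'pos
        · -- v = x + 1 = u : contradiction
          exfalso
          apply huv
          subst ha'0
          have h2 : v = x + 1 := by simpa using hxa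
          rw [hx, ← h2]
        · right; left
          refine upArc_of_eq_add (a := a') (by omega) ?_ ?_
          · rw [hx]
            push_cast at hxa ⊢
            linear_combination hxa
          · have h2 := arcFrom_shift harc
            rwa [← hx] at h2
    · -- UpArc v x
      obtain ⟨a, haln, hxa, harc⟩ := upArc_elim' hdown
      rcases Nat.lt_or_ge (a + 1) n with h1 | h1
      · right; right
        refine upArc_of_eq_add (a := a + 1) h1 ?_ ?_
        · rw [hx, hxa]; push_cast; ring
        · intro j hj
          rcases Nat.lt_or_ge j a with hja | hja
          · exact harc j hja
          · have hjeq : j = a := by omega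
            rw [hjeq, ← hxa]
            exact hedge
      · exfalso
        apply huv
        have han : a + 1 = n := by omega
        have h2 : u = v + (((a + 1 : ℕ)) : ZMod n) := by rw [hx, hxa]; push_cast; ring
        rw [han, ZMod.natCast_self, add_zero] at h2
        exact h2

lemma reach_rel (hn : 3 ≤ n) (hK : K ≤ cycleCirculant n) {u v : ZMod n}
    (h : K.Reachable u v) : u = v ∨ UpArc K u v ∨ UpArc K v u := by
  obtain ⟨w⟩ := h
  induction w with
  | nil => exact Or.inl rfl
  | cons hadj p ih => exact rel_step hn hadj hK ih

lemma not_upArc_both (habs : ∃ e, ¬ K.Adj e (e + 1)) {u v : ZMod n} (huv : u ≠ v) :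
    ¬(UpArc K u v ∧ UpArc K v u) := by
  rintro ⟨h1, h2⟩
  obtain ⟨e, he⟩ := habs
  apply he
  have hab : (v - u).val + (u - v).val = n := val_add_val_eq_n huv
  set a := (v - u).val with ha
  set b := (u - v).val with hb
  set c := (e - u).val with hc
  have hce : e = u + (c : ZMod n) := by rw [hc, ZMod.natCast_zmod_val]; ring
  rcases Nat.lt_or_ge c a with hca | hca
  · rw [hce]
    exact h1 c hca
  · have hva : v = u + (a : ZMod n) := by rw [ha, ZMod.natCast_zmod_val]; ring
    have he2 : e = v + ((c - a : ℕ) : ZMod n) := by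
      rw [hce, hva]
      have : (c : ZMod n) = (a : ZMod n) + ((c - a : ℕ) : ZMod n) := by
        rw [← Nat.cast_add]
        congr 1
        omega
      rw [this]
      ring
    have hclt : c < n := ZMod.val_lt _
    have hcb : c - a < b := by omega
    rw [he2]
    exact h2 _ hcb

end Graph2

section Graph3
variable [NeZero n] {K : SimpleGraph (ZMod n)}

lemma isBridge_of (hn : 3 ≤ n) (hK : K ≤ cycleCirculant n) {j : ZMod n}
    (hedge : K.Adj j (j + 1)) (habs : ∃ e, ¬ K.Adj e (e + 1)) :
    K.IsBridge s(j, j + 1) := by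
  rw [SimpleGraph.isBridge_iff]
  intro hreach
  set K' := K \ SimpleGraph.fromEdgeSet {s(j, j + 1)} with hK'def
  have hK'le : K' ≤ cycleCirculant n := le_trans sdiff_le hK
  have hK'j : ¬ K'.Adj j (j + 1) := by
    rw [hK'def, SimpleGraph.sdiff_adj]
    rintro ⟨-, hno⟩
    apply hno
    rw [SimpleGraph.fromEdgeSet_adj]
    exact ⟨Set.mem_singleton _, (cyc_adj.mp (hK hedge)).1⟩
  have hjj : j ≠ j + 1 := (cyc_adj.mp (hK hedge)).1
  rcases reach_rel hn hK'le hreach with heq | hup | hdown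
  · exact hjj heq
  · obtain ⟨a, haln, hxa, harc⟩ := upArc_elim' hup
    -- (j+1) - j = 1 so a could be anything; use val directly instead
    have hval : ((j + 1) - j : ZMod n).val = 1 := by
      rw [add_sub_cancel_left, val_one_zmod (by omega)]
    have := hup 0 (by rw [hval]; omega)
    simp only [Nat.cast_zero, add_zero] at this
    exact hK'j this
  · obtain ⟨e, he⟩ := habs
    have hej : e ≠ j := by
      intro hh
      rw [hh] at he
      exact he hedge
    have hval : ((j - (j + 1)) : ZMod n).val = n - 1 := by
      have : (j - (j + 1)) = (-1 : ZMod n) := by ring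
      rw [this, val_neg_one_zmod (by omega)]
    set c := (e - (j + 1)).val with hc
    have hclt : c < n := ZMod.val_lt _
    have hcne : c ≠ n - 1 := by
      intro hh
      apply hej
      have h1 : e - (j + 1) = ((n - 1 : ℕ) : ZMod n) := by
        rw [← ZMod.natCast_zmod_val (e - (j + 1)), ← hc, hh]
      have h2 : ((n - 1 : ℕ) : ZMod n) = -1 := by
        rw [Nat.cast_sub (by omega), ZMod.natCast_self]
        simp
      have h3 : e - (j + 1) = -1 := by rw [h1, h2]
      linear_combination h3
    have := hdown c (by rw [hval]; omega)
    have he' : j + 1 + (c : ZMod n) = e := by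
      rw [hc, ZMod.natCast_zmod_val]
      ring
    rw [he'] at this
    exact he (this.1)

lemma acyclic_of_absent (hn : 3 ≤ n) (hK : K ≤ cycleCirculant n)
    (habs : ∃ e, ¬ K.Adj e (e + 1)) : K.IsAcyclic := by
  rw [isAcyclic_iff_forall_adj_isBridge]
  intro a b hab
  rcases adj_cases (hK hab) with h1 | h1
  · subst h1
    exact isBridge_of hn hK hab habs
  · subst h1
    have := isBridge_of hn hK hab.symm habs
    rwa [Sym2.eq_swap] at this

lemma exists_absent_of_acyclic (hn : 3 ≤ n) (hK : K ≤ cycleCirculant n)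
    (hac : K.IsAcyclic) : ∃ e, ¬ K.Adj e (e + 1) := by
  by_contra hall
  push_neg at hall
  have hedge : K.Adj 0 (0 + 1) := hall 0
  have hbr := (isAcyclic_iff_forall_adj_isBridge.mp hac) hedge
  rw [SimpleGraph.isBridge_iff] at hbr
  apply hbr
  set K' := K \ SimpleGraph.fromEdgeSet {s((0 : ZMod n), 0 + 1)} with hK'def
  have harc : ArcFrom K' 1 (n - 1) := by
    intro j hj
    have hKadj : K.Adj (1 + (j : ZMod n)) (1 + (j : ZMod n) + 1) := hall _
    rw [hK'def, SimpleGraph.sdiff_adj]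
    refine ⟨hKadj, ?_⟩
    rw [SimpleGraph.fromEdgeSet_adj]
    rintro ⟨hmem, hne⟩
    rw [Set.mem_singleton_iff, Sym2.eq_iff] at hmem
    rcases hmem with ⟨h1, h2⟩ | ⟨h1, h2⟩
    · have hj1 : (j : ZMod n) = ((n - 1 : ℕ) : ZMod n) := by
        have hjm : (j : ZMod n) = -1 := by linear_combination h1
        rw [hjm, Nat.cast_sub (by omega), ZMod.natCast_self]
        simp
      have := congrArg ZMod.val hj1
      rw [ZMod.val_cast_of_lt (by omega), ZMod.val_cast_of_lt (by omega)] at this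
      omega
    · have h2' : ((2 : ℕ) : ZMod n) = 0 := by push_cast; linear_combination h2 - h1
      have hdvd := (ZMod.natCast_eq_zero_iff 2 n).mp h2'
      have := Nat.le_of_dvd (by omega) hdvd
      omega
  have hr : K'.Reachable 1 (1 + ((n - 1 : ℕ) : ZMod n)) := reach_of_arcFrom _ harc
  have hone : (1 + ((n - 1 : ℕ) : ZMod n)) = 0 := by
    rw [Nat.cast_sub (by omega), ZMod.natCast_self]
    ring
  rw [hone] at hr
  have : (0 : ZMod n) + 1 = 1 := by ring
  rw [this]
  rw [this] at hK'def
  rw [hK'def] at hr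
  exact hr.symm

end Graph3

section SigmaDef
variable [NeZero n]

lemma S_none {x : S} (h1 : x ≠ some true) (h2 : x ≠ some false) : x = none := by
  match x with
  | none => rfl
  | some true => exact absurd rfl h1
  | some false => exact absurd rfl h2

def Cyc (σ : ZMod n → S) : Prop := ∀ i, Ok (σ i) (σ (i + 1))

def Valid (σ : ZMod n → S) : Prop :=
  Cyc σ ∧ (∃ i, σ i ≠ some true) ∧ (∃ i, σ i ≠ some false)

def good (σ : ZMod n → S) (j : ZMod n) : Prop := σ j = some true ∨ σ (j + 1) = some false

def sigSub (hn : 3 ≤ n) (σ : ZMod n → S) : (cycleCirculant n).Subgraph where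
  verts := Set.univ
  Adj i j := (j = i + 1 ∧ good σ i) ∨ (i = j + 1 ∧ good σ j)
  adj_sub := by
    rintro i j (⟨rfl, -⟩ | ⟨rfl, -⟩)
    · exact adj_succ hn i
    · exact (adj_succ hn j).symm
  edge_vert := fun {_ _} _ => Set.mem_univ _
  symm := by
    constructor
    rintro i j (⟨h1, h2⟩ | ⟨h1, h2⟩)
    · exact Or.inr ⟨h1, h2⟩
    · exact Or.inl ⟨h1, h2⟩

lemma sig_le (hn : 3 ≤ n) (σ : ZMod n → S) :
    (sigSub hn σ).spanningCoe ≤ cycleCirculant n := fun {_ _} h => (sigSub hn σ).adj_sub h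

lemma sig_adj (hn : 3 ≤ n) (σ : ZMod n → S) (i j : ZMod n) :
    (sigSub hn σ).spanningCoe.Adj i j ↔
      ((j = i + 1 ∧ good σ i) ∨ (i = j + 1 ∧ good σ j)) := by
  rw [SimpleGraph.Subgraph.spanningCoe_adj]
  exact Iff.rfl

lemma two_ne_zero_zmod (hn : 3 ≤ n) : ((2 : ZMod n)) ≠ 0 := by
  have := natCast_ne_zero_zmod (n := n) (k := 2) (by omega) (by omega)
  simpa using this

lemma sig_edge_iff (hn : 3 ≤ n) (σ : ZMod n → S) (j : ZMod n) :
    (sigSub hn σ).spanningCoe.Adj j (j + 1) ↔ good σ j := by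
  rw [sig_adj]
  constructor
  · rintro (⟨-, h2⟩ | ⟨h1, -⟩)
    · exact h2
    · exfalso
      apply two_ne_zero_zmod hn
      linear_combination -h1
  · intro h
    exact Or.inl ⟨rfl, h⟩

lemma sig_absent (hn : 3 ≤ n) {σ : ZMod n → S} (hv : Valid σ) :
    ∃ e, ¬ (sigSub hn σ).spanningCoe.Adj e (e + 1) := by
  by_contra hall
  push_neg at hall
  have hgood : ∀ e, good σ e := fun e => (sig_edge_iff hn σ e).mp (hall e)
  have hdown : ∀ j, σ j ≠ some true → σ (j + 1) = some false :=
    fun j hj => (hgood j).resolve_left hj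
  obtain ⟨i0, hi0⟩ := hv.2.1
  have hall2 : ∀ k : ℕ, σ (i0 + 1 + (k : ZMod n)) = some false := by
    intro k
    induction k with
    | zero => simpa using hdown i0 hi0
    | succ k ih =>
      have hne : σ (i0 + 1 + (k : ZMod n)) ≠ some true := by rw [ih]; simp
      have h2 := hdown _ hne
      have e : i0 + 1 + ((k + 1 : ℕ) : ZMod n) = (i0 + 1 + (k : ZMod n)) + 1 := by
        push_cast; ring
      rw [e]
      exact h2
  obtain ⟨i1, hi1⟩ := hv.2.2
  apply hi1
  have e : i1 = i0 + 1 + (((i1 - i0 - 1 : ZMod n).val : ℕ) : ZMod n) := by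
    rw [ZMod.natCast_zmod_val]; ring
  rw [e]
  exact hall2 _

lemma exU {σ : ZMod n → S} (hv : Valid σ) (i : ZMod n) :
    ∃ k : ℕ, σ (i + (k : ZMod n)) ≠ some true := by
  obtain ⟨i0, h⟩ := hv.2.1
  refine ⟨(i0 - i).val, ?_⟩
  rw [ZMod.natCast_zmod_val]
  have e : i + (i0 - i) = i0 := by ring
  rw [e]
  exact h

lemma exD {σ : ZMod n → S} (hv : Valid σ) (i : ZMod n) :
    ∃ k : ℕ, σ (i - (k : ZMod n)) ≠ some false := by
  obtain ⟨i0, h⟩ := hv.2.2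
  refine ⟨(i - i0).val, ?_⟩
  rw [ZMod.natCast_zmod_val]
  have e : i - (i - i0) = i0 := by ring
  rw [e]
  exact h

noncomputable def gU {σ : ZMod n → S} (hv : Valid σ) (i : ZMod n) : ℕ := Nat.find (exU hv i)
noncomputable def gD {σ : ZMod n → S} (hv : Valid σ) (i : ZMod n) : ℕ := Nat.find (exD hv i)

lemma gU_spec {σ : ZMod n → S} (hv : Valid σ) (i : ZMod n) :
    σ (i + ((gU hv i : ℕ) : ZMod n)) ≠ some true := Nat.find_spec (exU hv i)

lemma gU_min {σ : ZMod n → S} (hv : Valid σ) (i : ZMod n) {k : ℕ} (hk : k < gU hv i) :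
    σ (i + (k : ZMod n)) = some true := by
  have := Nat.find_min (exU hv i) hk
  rwa [not_ne_iff] at this

lemma gD_spec {σ : ZMod n → S} (hv : Valid σ) (i : ZMod n) :
    σ (i - ((gD hv i : ℕ) : ZMod n)) ≠ some false := Nat.find_spec (exD hv i)

lemma gD_min {σ : ZMod n → S} (hv : Valid σ) (i : ZMod n) {k : ℕ} (hk : k < gD hv i) :
    σ (i - (k : ZMod n)) = some false := by
  have := Nat.find_min (exD hv i) hk
  rwa [not_ne_iff] at this

lemma gU_pos {σ : ZMod n → S} (hv : Valid σ) {i : ZMod n} (hi : σ i = some true) :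
    1 ≤ gU hv i := by
  by_contra h
  push_neg at h
  have h0 : gU hv i = 0 := by omega
  have := gU_spec hv i
  rw [h0] at this
  simp only [Nat.cast_zero, add_zero] at this
  exact this hi

lemma gD_pos {σ : ZMod n → S} (hv : Valid σ) {i : ZMod n} (hi : σ i = some false) :
    1 ≤ gD hv i := by
  by_contra h
  push_neg at h
  have h0 : gD hv i = 0 := by omega
  have := gD_spec hv i
  rw [h0] at this
  simp only [Nat.cast_zero, sub_zero] at this
  exact this hi

lemma gU_le {σ : ZMod n → S} (hv : Valid σ) (i : ZMod n) : gU hv i ≤ n - 1 := by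
  obtain ⟨i0, h⟩ := hv.2.1
  have hw : σ (i + (((i0 - i).val : ℕ) : ZMod n)) ≠ some true := by
    rw [ZMod.natCast_zmod_val]
    have e : i + (i0 - i) = i0 := by ring
    rw [e]; exact h
  have hle : gU hv i ≤ (i0 - i).val := Nat.find_le hw
  have hlt : (i0 - i).val < n := ZMod.val_lt _
  omega

lemma gD_le {σ : ZMod n → S} (hv : Valid σ) (i : ZMod n) : gD hv i ≤ n - 1 := by
  obtain ⟨i0, h⟩ := hv.2.2
  have hw : σ (i - (((i - i0).val : ℕ) : ZMod n)) ≠ some false := by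
    rw [ZMod.natCast_zmod_val]
    have e : i - (i - i0) = i0 := by ring
    rw [e]; exact h
  have hle : gD hv i ≤ (i - i0).val := Nat.find_le hw
  have hlt : (i - i0).val < n := ZMod.val_lt _
  omega

lemma gU_none {σ : ZMod n → S} (hv : Valid σ) {i : ZMod n} (hi : σ i = some true) :
    σ (i + ((gU hv i : ℕ) : ZMod n)) = none := by
  have g1 := gU_pos hv hi
  have h1 : σ (i + (((gU hv i - 1 : ℕ)) : ZMod n)) = some true := gU_min hv i (by omega)
  have h2 := hv.1 (i + (((gU hv i - 1 : ℕ)) : ZMod n))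
  have e : i + (((gU hv i - 1 : ℕ)) : ZMod n) + 1 = i + ((gU hv i : ℕ) : ZMod n) := by
    rw [Nat.cast_sub g1]
    push_cast
    ring
  rw [e] at h2
  refine S_none (gU_spec hv i) ?_
  intro hF
  exact h2 ⟨h1, hF⟩

lemma gD_none {σ : ZMod n → S} (hv : Valid σ) {i : ZMod n} (hi : σ i = some false) :
    σ (i - ((gD hv i : ℕ) : ZMod n)) = none := by
  have g1 := gD_pos hv hi
  have h1 : σ (i - (((gD hv i - 1 : ℕ)) : ZMod n)) = some false := gD_min hv i (by omega)
  have h2 := hv.1 (i - ((gD hv i : ℕ) : ZMod n))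
  have e : i - ((gD hv i : ℕ) : ZMod n) + 1 = i - (((gD hv i - 1 : ℕ)) : ZMod n) := by
    rw [Nat.cast_sub g1]
    push_cast
    ring
  rw [e, h1] at h2
  refine S_none ?_ (gD_spec hv i)
  intro hT
  exact h2 ⟨hT, rfl⟩

noncomputable def rootF {σ : ZMod n → S} (hv : Valid σ) : ZMod n → ZMod n := fun i =>
  if σ i = some true then i + ((gU hv i : ℕ) : ZMod n)
  else if σ i = some false then i - ((gD hv i : ℕ) : ZMod n)
  else i

lemma root_none {σ : ZMod n → S} (hv : Valid σ) {i : ZMod n} (hi : σ i = none) :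
    rootF hv i = i := by
  rw [rootF]
  simp [hi]

lemma root_T {σ : ZMod n → S} (hv : Valid σ) {i : ZMod n} (hi : σ i = some true) :
    rootF hv i = i + ((gU hv i : ℕ) : ZMod n) := by
  rw [rootF, if_pos hi]

lemma root_F {σ : ZMod n → S} (hv : Valid σ) {i : ZMod n} (hi : σ i = some false) :
    rootF hv i = i - ((gD hv i : ℕ) : ZMod n) := by
  rw [rootF, if_neg (by rw [hi]; simp), if_pos hi]

end SigmaDef

section RootStep
variable [NeZero n] {σ : ZMod n → S}

lemma root_step (hn : 3 ≤ n) (hv : Valid σ) {j : ZMod n} (hg : good σ j) :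
    rootF hv j = rootF hv (j + 1) := by
  by_cases hj : σ j = some true
  · have g1 : 1 ≤ gU hv j := gU_pos hv hj
    by_cases hj1 : σ (j + 1) = some true
    · have key : gU hv j = gU hv (j + 1) + 1 := by
        rw [gU, Nat.find_eq_iff]
        constructor
        · have hspec := gU_spec hv (j + 1)
          have e : j + ((gU hv (j + 1) + 1 : ℕ) : ZMod n)
              = (j + 1) + ((gU hv (j + 1) : ℕ) : ZMod n) := by push_cast; ring
          rw [e]
          exact hspec
        · intro k hk
          rw [not_ne_iff]
          rcases Nat.eq_zero_or_pos k with rfl | hkpos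
          · simpa using hj
          · obtain ⟨k', rfl⟩ := Nat.exists_eq_succ_of_ne_zero (n := k) (by omega)
            have hmin := gU_min hv (j + 1) (k := k') (by omega)
            have e : j + ((k' + 1 : ℕ) : ZMod n) = (j + 1) + ((k' : ℕ) : ZMod n) := by
              push_cast; ring
            rw [e]
            exact hmin
      rw [root_T hv hj, root_T hv hj1, key]
      push_cast; ring
    · have hj1F : σ (j + 1) ≠ some false := by
        intro hF
        exact hv.1 j ⟨hj, hF⟩
      have hnone : σ (j + 1) = none := S_none hj1 hj1F
      have key : gU hv j = 1 := by
        rw [gU, Nat.find_eq_iff]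
        constructor
        · have e : j + ((1 : ℕ) : ZMod n) = j + 1 := by push_cast; ring
          rw [e, hnone]
          simp
        · intro k hk
          have hk0 : k = 0 := by omega
          subst hk0
          rw [not_ne_iff]
          simpa using hj
      rw [root_T hv hj, root_none hv hnone, key]
      push_cast; ring
  · have hF : σ (j + 1) = some false := hg.resolve_left hj
    have g1 : 1 ≤ gD hv (j + 1) := gD_pos hv hF
    by_cases hjF : σ j = some false
    · have key : gD hv (j + 1) = gD hv j + 1 := by
        rw [gD, Nat.find_eq_iff]
        constructor
        · have hspec := gD_spec hv j
          have e : (j + 1) - ((gD hv j + 1 : ℕ) : ZMod n)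
              = j - ((gD hv j : ℕ) : ZMod n) := by push_cast; ring
          rw [e]
          exact hspec
        · intro k hk
          rw [not_ne_iff]
          rcases Nat.eq_zero_or_pos k with rfl | hkpos
          · simpa using hF
          · obtain ⟨k', rfl⟩ := Nat.exists_eq_succ_of_ne_zero (n := k) (by omega)
            have hmin := gD_min hv j (k := k') (by omega)
            have e : (j + 1) - ((k' + 1 : ℕ) : ZMod n) = j - ((k' : ℕ) : ZMod n) := by
              push_cast; ring
            rw [e]
            exact hmin
      rw [root_F hv hF, root_F hv hjF, key]
      push_cast; ring
    · have hnone : σ j = none := S_none hj hjF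
      have key : gD hv (j + 1) = 1 := by
        rw [gD, Nat.find_eq_iff]
        constructor
        · have e : (j + 1) - ((1 : ℕ) : ZMod n) = j := by push_cast; ring
          rw [e, hnone]
          simp
        · intro k hk
          have hk0 : k = 0 := by omega
          subst hk0
          rw [not_ne_iff]
          simpa using hF
      rw [root_F hv hF, root_none hv hnone, key]
      push_cast; ring

lemma root_arc (hn : 3 ≤ n) (hv : Valid σ) (u : ZMod n) (k : ℕ)
    (h : ∀ j : ℕ, j < k → good σ (u + (j : ZMod n))) :
    rootF hv u = rootF hv (u + (k : ZMod n)) := by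
  induction k with
  | zero => simp
  | succ k ih =>
    have h1 := ih (fun j hj => h j (by omega))
    have h2 := root_step hn hv (h k (by omega))
    have e : u + ((k + 1 : ℕ) : ZMod n) = (u + (k : ZMod n)) + 1 := by push_cast; ring
    rw [e]
    rw [h1, h2]

lemma root_reach_eq (hn : 3 ≤ n) (hv : Valid σ) {u v : ZMod n}
    (h : (sigSub hn σ).spanningCoe.Reachable u v) : rootF hv u = rootF hv v := by
  rcases reach_rel hn (sig_le hn σ) h with rfl | hup | hdown
  · rfl
  · obtain ⟨a, _, hva, harc⟩ := upArc_elim' hup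
    have hh := root_arc hn hv u a (fun j hj => (sig_edge_iff hn σ _).mp (harc j hj))
    rw [← hva] at hh
    exact hh
  · obtain ⟨a, _, hva, harc⟩ := upArc_elim' hdown
    have hh := root_arc hn hv v a (fun j hj => (sig_edge_iff hn σ _).mp (harc j hj))
    rw [← hva] at hh
    exact hh.symm

lemma reach_root (hn : 3 ≤ n) (hv : Valid σ) (i : ZMod n) :
    (sigSub hn σ).spanningCoe.Reachable i (rootF hv i) := by
  by_cases hT : σ i = some true
  · rw [root_T hv hT]
    have harc : ArcFrom (sigSub hn σ).spanningCoe i (gU hv i) := by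
      intro j hj
      exact (sig_edge_iff hn σ _).mpr (Or.inl (gU_min hv i hj))
    exact reach_of_arcFrom _ harc
  by_cases hF : σ i = some false
  · rw [root_F hv hF]
    have harc : ArcFrom (sigSub hn σ).spanningCoe (i - ((gD hv i : ℕ) : ZMod n)) (gD hv i) := by
      intro j hj
      refine (sig_edge_iff hn σ _).mpr (Or.inr ?_)
      have e : i - ((gD hv i : ℕ) : ZMod n) + (j : ZMod n) + 1
          = i - (((gD hv i - (j + 1) : ℕ)) : ZMod n) := by
        rw [Nat.cast_sub (by omega)]
        push_cast
        ring
      rw [e]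
      exact gD_min hv i (by omega)
    have hr := reach_of_arcFrom (K := (sigSub hn σ).spanningCoe)
      (u := i - ((gD hv i : ℕ) : ZMod n)) (gD hv i) harc
    have e : i - ((gD hv i : ℕ) : ZMod n) + ((gD hv i : ℕ) : ZMod n) = i := by ring
    rw [e] at hr
    exact hr.symm
  · rw [root_none hv (S_none hT hF)]

end RootStep

section Phi
variable [NeZero n] {H : (cycleCirculant n).Subgraph} {f : ZMod n → ZMod n}

open scoped Classical in
noncomputable def phiSig (H : (cycleCirculant n).Subgraph) (f : ZMod n → ZMod n) :
    ZMod n → S := fun i =>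
  if f i = i then none
  else if UpArc H.spanningCoe i (f i) then some true else some false

lemma phi_none_iff {i : ZMod n} : phiSig H f i = none ↔ f i = i := by
  unfold phiSig
  split_ifs with h1 h2 <;> simp [h1]

lemma phi_T_of {i : ZMod n} (h1 : f i ≠ i) (h2 : UpArc H.spanningCoe i (f i)) :
    phiSig H f i = some true := by
  unfold phiSig
  rw [if_neg h1, if_pos h2]

lemma phi_F_of {i : ZMod n} (h1 : f i ≠ i) (h2 : ¬ UpArc H.spanningCoe i (f i)) :
    phiSig H f i = some false := by
  unfold phiSig
  rw [if_neg h1, if_neg h2]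

lemma phi_T_elim {i : ZMod n} (h : phiSig H f i = some true) :
    f i ≠ i ∧ UpArc H.spanningCoe i (f i) := by
  unfold phiSig at h
  by_cases h1 : f i = i
  · rw [if_pos h1] at h; simp at h
  · rw [if_neg h1] at h
    by_cases h2 : UpArc H.spanningCoe i (f i)
    · exact ⟨h1, h2⟩
    · rw [if_neg h2] at h; simp at h

lemma phi_F_elim {i : ZMod n} (h : phiSig H f i = some false) :
    f i ≠ i ∧ ¬ UpArc H.spanningCoe i (f i) := by
  unfold phiSig at h
  by_cases h1 : f i = i
  · rw [if_pos h1] at h; simp at h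
  · rw [if_neg h1] at h
    by_cases h2 : UpArc H.spanningCoe i (f i)
    · rw [if_pos h2] at h; simp at h
    · exact ⟨h1, h2⟩

lemma forest_le : H.spanningCoe ≤ cycleCirculant n := fun {_ _} h => H.adj_sub h

lemma f_cases (hn : 3 ≤ n) (hre : ∀ v, H.spanningCoe.Reachable v (f v)) (i : ZMod n) :
    f i = i ∨ UpArc H.spanningCoe i (f i) ∨ UpArc H.spanningCoe (f i) i := by
  rcases reach_rel hn forest_le (hre i) with h | h | h
  · exact Or.inl h.symm
  · exact Or.inr (Or.inl h)
  · exact Or.inr (Or.inr h)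

lemma f_excl (hn : 3 ≤ n) (hac : H.spanningCoe.IsAcyclic) {i : ZMod n} (hne : f i ≠ i) :
    ¬ (UpArc H.spanningCoe i (f i) ∧ UpArc H.spanningCoe (f i) i) :=
  not_upArc_both (exists_absent_of_acyclic hn forest_le hac) (fun h => hne h.symm)

lemma f_root (hre : ∀ v, H.spanningCoe.Reachable v (f v))
    (hco : ∀ u v, H.spanningCoe.Reachable u v → f u = f v) (i : ZMod n) :
    f (f i) = f i := (hco i (f i) (hre i)).symm

lemma f_edge (hco : ∀ u v, H.spanningCoe.Reachable u v → f u = f v) {j : ZMod n}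
    (h : H.spanningCoe.Adj j (j + 1)) : f j = f (j + 1) := hco _ _ h.reachable

lemma phi_good_adj (hn : 3 ≤ n) (hre : ∀ v, H.spanningCoe.Reachable v (f v))
    {j : ZMod n} (hg : good (phiSig H f) j) : H.spanningCoe.Adj j (j + 1) := by
  rcases hg with hT | hF
  · obtain ⟨hne, hup⟩ := phi_T_elim hT
    have h1 : 1 ≤ (f j - j).val := val_pos_of_ne (fun h => hne h.symm)
    have h2 := hup 0 (by omega)
    simpa using h2
  · obtain ⟨hne, hnup⟩ := phi_F_elim hF
    have hdown : UpArc H.spanningCoe (f (j + 1)) (j + 1) :=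
      ((f_cases hn hre (j + 1)).resolve_left hne).resolve_left hnup
    have hb1 : 1 ≤ ((j + 1) - f (j + 1)).val := val_pos_of_ne hne
    have h2 := hdown (((j + 1) - f (j + 1)).val - 1) (by omega)
    have e : f (j + 1) + (((((j + 1) - f (j + 1)).val - 1 : ℕ)) : ZMod n) = j := by
      rw [Nat.cast_sub hb1, ZMod.natCast_zmod_val]
      push_cast
      ring
    rw [e] at h2
    exact h2

lemma phi_adj_good (hn : 3 ≤ n) (hac : H.spanningCoe.IsAcyclic)
    (hre : ∀ v, H.spanningCoe.Reachable v (f v))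
    (hco : ∀ u v, H.spanningCoe.Reachable u v → f u = f v)
    {j : ZMod n} (hedge : H.spanningCoe.Adj j (j + 1)) : good (phiSig H f) j := by
  have hjne : j ≠ j + 1 := (cyc_adj.mp (forest_le hedge)).1
  have hff : f j = f (j + 1) := f_edge hco hedge
  by_cases hrj : f j = j
  · -- root is j ; then σ (j+1) = some false
    right
    have hne1 : f (j + 1) ≠ j + 1 := by rw [← hff, hrj]; exact hjne
    apply phi_F_of hne1
    intro hupp
    -- UpArc (f (j+1)) (j+1) also holds since f(j+1) = j and edge j present
    have hd : UpArc H.spanningCoe (f (j + 1)) (j + 1) := by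
      rw [← hff, hrj]
      refine upArc_of_eq_add (a := 1) (by omega) (by push_cast; ring) ?_
      intro k hk
      have hk0 : k = 0 := by omega
      subst hk0
      simpa using hedge
    exact f_excl hn hac hne1 ⟨hupp, hd⟩
  by_cases hrj1 : f j = j + 1
  · left
    apply phi_T_of (by rw [hrj1]; exact fun h => hjne h.symm)
    rw [hrj1]
    refine upArc_of_eq_add (a := 1) (by omega) (by push_cast; ring) ?_
    intro k hk
    have hk0 : k = 0 := by omega
    subst hk0
    simpa using hedge
  · rcases (f_cases hn hre j).resolve_left hrj with hup | hdown
    · exact Or.inl (phi_T_of hrj hup)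
    · right
      have hne1 : f (j + 1) ≠ j + 1 := by rw [← hff]; exact hrj1
      apply phi_F_of hne1
      intro hupp
      obtain ⟨a, haln, hja, harc⟩ := upArc_elim' hdown
      have han : a + 1 < n := by
        by_contra hge
        push_neg at hge
        have ha1 : a + 1 = n := by omega
        apply hrj1
        have hthis : j + 1 = f j + ((a + 1 : ℕ) : ZMod n) := by push_cast; linear_combination hja
        rw [ha1, ZMod.natCast_self, add_zero] at hthis
        exact hthis.symm
      have hext : UpArc H.spanningCoe (f j) (j + 1) := by
        refine upArc_of_eq_add (a := a + 1) han (by push_cast; linear_combination hja) ?_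
        intro k hk
        rcases Nat.lt_or_ge k a with hka | hka
        · exact harc k hka
        · have hkeq : k = a := by omega
          rw [hkeq, ← hja]
          exact hedge
      refine f_excl hn hac hne1 ⟨hupp, ?_⟩
      rw [← hff]
      exact hext

end Phi

section Phi2
variable [NeZero n] {H : (cycleCirculant n).Subgraph} {f : ZMod n → ZMod n}

lemma phi_valid (hn : 3 ≤ n) (hac : H.spanningCoe.IsAcyclic)
    (hre : ∀ v, H.spanningCoe.Reachable v (f v))
    (hco : ∀ u v, H.spanningCoe.Reachable u v → f u = f v) :
    Valid (phiSig H f) := by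
  refine ⟨?_, ⟨f 0, ?_⟩, ⟨f 0, ?_⟩⟩
  · intro j
    rintro ⟨hT, hF⟩
    obtain ⟨hne1, hup⟩ := phi_T_elim hT
    obtain ⟨hne2, hnup⟩ := phi_F_elim hF
    have hdown : UpArc H.spanningCoe (f (j + 1)) (j + 1) :=
      ((f_cases hn hre (j + 1)).resolve_left hne2).resolve_left hnup
    have hedge : H.spanningCoe.Adj j (j + 1) := phi_good_adj hn hre (Or.inr hF)
    have hff : f j = f (j + 1) := f_edge hco hedge
    have ha1 : 1 ≤ (f j - j).val := val_pos_of_ne (fun h => hne1 h.symm)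
    have hb1 : 1 ≤ ((j + 1) - f (j + 1)).val := val_pos_of_ne hne2
    have haltn : (f j - j).val < n := ZMod.val_lt _
    have hbltn : ((j + 1) - f (j + 1)).val < n := ZMod.val_lt _
    set a := (f j - j).val with hadef
    set b := ((j + 1) - f (j + 1)).val with hbdef
    have va : ((a : ℕ) : ZMod n) = f j - j := by rw [hadef, ZMod.natCast_zmod_val]
    have vb : ((b : ℕ) : ZMod n) = (j + 1) - f (j + 1) := by rw [hbdef, ZMod.natCast_zmod_val]
    have hsum : a + b = n + 1 := by
      have hcast : ((a + b - 1 : ℕ) : ZMod n) = 0 := by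
        rw [Nat.cast_sub (by omega), Nat.cast_add, va, vb, ← hff]
        push_cast
        ring
      have hdvd := (ZMod.natCast_eq_zero_iff _ n).mp hcast
      rcases hdvd with ⟨c, hc⟩
      have hn0 : 0 < n := by omega
      have hc0 : c ≠ 0 := by rintro rfl; omega
      have hc2 : c < 2 := by
        by_contra hge
        push_neg at hge
        have : 2 * n ≤ n * c := by nlinarith
        omega
      have hc1 : c = 1 := by omega
      rw [hc1, mul_one] at hc
      omega
    have hall : ∀ e, H.spanningCoe.Adj e (e + 1) := by
      intro e
      set c := (e - j).val with hcdef
      have hce : e = j + ((c : ℕ) : ZMod n) := by rw [hcdef, ZMod.natCast_zmod_val]; ring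
      rcases Nat.lt_or_ge c a with hca | hca
      · have h2 := hup c hca
        rw [← hce] at h2
        exact h2
      · have hclt : c < n := ZMod.val_lt _
        have htb : c - a < b := by omega
        have h2 := hdown (c - a) htb
        have e2 : f (j + 1) + ((c - a : ℕ) : ZMod n) = e := by
          rw [← hff, Nat.cast_sub hca, va, hce]
          push_cast
          ring
        rw [e2] at h2
        exact h2
    obtain ⟨e0, he0⟩ := exists_absent_of_acyclic hn forest_le hac
    exact he0 (hall e0)
  · rw [phi_none_iff.mpr (f_root hre hco 0)]
    simp
  · rw [phi_none_iff.mpr (f_root hre hco 0)]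
    simp

lemma sig_phi_eq (hn : 3 ≤ n) (hsp : H.IsSpanning) (hac : H.spanningCoe.IsAcyclic)
    (hre : ∀ v, H.spanningCoe.Reachable v (f v))
    (hco : ∀ u v, H.spanningCoe.Reachable u v → f u = f v) :
    sigSub hn (phiSig H f) = H := by
  apply SimpleGraph.Subgraph.ext
  · exact (Set.eq_univ_of_forall hsp).symm
  · funext i j
    apply propext
    constructor
    · rintro (⟨rfl, hg⟩ | ⟨rfl, hg⟩)
      · exact phi_good_adj hn hre hg
      · exact (phi_good_adj hn hre hg).symm
    · intro hadj
      have hadj' : H.spanningCoe.Adj i j := hadj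
      rcases adj_cases (forest_le hadj') with h1 | h1
      · left
        refine ⟨h1, phi_adj_good hn hac hre hco ?_⟩
        rw [← h1]
        exact hadj'
      · right
        refine ⟨h1, phi_adj_good hn hac hre hco ?_⟩
        rw [← h1]
        exact hadj'.symm

end Phi2

section Phi3
variable [NeZero n] {H : (cycleCirculant n).Subgraph} {f : ZMod n → ZMod n}

lemma root_phi_eq (hn : 3 ≤ n) (hac : H.spanningCoe.IsAcyclic)
    (hre : ∀ v, H.spanningCoe.Reachable v (f v))
    (hco : ∀ u v, H.spanningCoe.Reachable u v → f u = f v) (i : ZMod n) :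
    rootF (phi_valid hn hac hre hco) i = f i := by
  set hv := phi_valid hn hac hre hco with hvdef
  by_cases h0 : f i = i
  · rw [root_none hv (phi_none_iff.mpr h0), h0]
  rcases (f_cases hn hre i).resolve_left h0 with hup | hdown
  · have hT : phiSig H f i = some true := phi_T_of h0 hup
    have ha1 : 1 ≤ (f i - i).val := val_pos_of_ne (fun h => h0 h.symm)
    have haltn : (f i - i).val < n := ZMod.val_lt _
    have key : gU hv i = (f i - i).val := by
      rw [gU, Nat.find_eq_iff]
      constructor
      · have e : i + (((f i - i).val : ℕ) : ZMod n) = f i := by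
          rw [ZMod.natCast_zmod_val]; ring
        rw [e, phi_none_iff.mpr (f_root hre hco i)]
        simp
      · intro k hk
        rw [not_ne_iff]
        have hkval : ((k : ℕ) : ZMod n).val = k := ZMod.val_cast_of_lt (by omega)
        have hreach : H.spanningCoe.Reachable i (i + ((k : ℕ) : ZMod n)) :=
          reach_of_arcFrom k (fun t ht => hup t (by omega))
        have hfw : f (i + ((k : ℕ) : ZMod n)) = f i := (hco i _ hreach).symm
        have hwne : f (i + ((k : ℕ) : ZMod n)) ≠ i + ((k : ℕ) : ZMod n) := by
          rw [hfw]
          intro hh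
          have hval : (f i - i).val = k := by
            rw [show f i - i = ((k : ℕ) : ZMod n) from by rw [hh]; ring, hkval]
          omega
        apply phi_T_of hwne
        have hvw : (f (i + ((k : ℕ) : ZMod n)) - (i + ((k : ℕ) : ZMod n))).val
            = (f i - i).val - k := by
          have e : f (i + ((k : ℕ) : ZMod n)) - (i + ((k : ℕ) : ZMod n))
              = ((((f i - i).val - k : ℕ)) : ZMod n) := by
            rw [hfw, Nat.cast_sub (by omega), ZMod.natCast_zmod_val]
            ring
          rw [e, ZMod.val_cast_of_lt (by omega)]
        rw [UpArc, hvw]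
        intro t ht
        have h2 := hup (k + t) (by omega)
        have e : i + ((k : ℕ) : ZMod n) + ((t : ℕ) : ZMod n)
            = i + ((k + t : ℕ) : ZMod n) := by push_cast; ring
        rw [e]
        exact h2
    rw [root_T hv hT, key, ZMod.natCast_zmod_val]
    ring
  · have hnup : ¬ UpArc H.spanningCoe i (f i) := fun hu => f_excl hn hac h0 ⟨hu, hdown⟩
    have hF : phiSig H f i = some false := phi_F_of h0 hnup
    have hb1 : 1 ≤ (i - f i).val := val_pos_of_ne h0
    have hbltn : (i - f i).val < n := ZMod.val_lt _
    have key : gD hv i = (i - f i).val := by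
      rw [gD, Nat.find_eq_iff]
      constructor
      · have e : i - (((i - f i).val : ℕ) : ZMod n) = f i := by
          rw [ZMod.natCast_zmod_val]; ring
        rw [e, phi_none_iff.mpr (f_root hre hco i)]
        simp
      · intro k hk
        rw [not_ne_iff]
        have hkval : ((k : ℕ) : ZMod n).val = k := ZMod.val_cast_of_lt (by omega)
        have harc : ArcFrom H.spanningCoe (i - ((k : ℕ) : ZMod n)) k := by
          intro t ht
          have h2 := hdown ((i - f i).val - k + t) (by omega)
          have e : i - ((k : ℕ) : ZMod n) + ((t : ℕ) : ZMod n)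
              = f i + (((i - f i).val - k + t : ℕ) : ZMod n) := by
            rw [Nat.cast_add, Nat.cast_sub (by omega), ZMod.natCast_zmod_val]
            ring
          rw [e]
          exact h2
        have hreach : H.spanningCoe.Reachable (i - ((k : ℕ) : ZMod n)) i := by
          have h2 := reach_of_arcFrom k harc
          have e : i - ((k : ℕ) : ZMod n) + ((k : ℕ) : ZMod n) = i := by ring
          rw [e] at h2
          exact h2
        have hfw : f (i - ((k : ℕ) : ZMod n)) = f i := hco _ i hreach
        have hwne : f (i - ((k : ℕ) : ZMod n)) ≠ i - ((k : ℕ) : ZMod n) := by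
          rw [hfw]
          intro hh
          have hval : (i - f i).val = k := by
            rw [show i - f i = ((k : ℕ) : ZMod n) from by rw [hh]; ring, hkval]
          omega
        apply phi_F_of hwne
        have hdw : UpArc H.spanningCoe (f (i - ((k : ℕ) : ZMod n))) (i - ((k : ℕ) : ZMod n)) := by
          have hvw : ((i - ((k : ℕ) : ZMod n)) - f (i - ((k : ℕ) : ZMod n))).val
              = (i - f i).val - k := by
            have e : (i - ((k : ℕ) : ZMod n)) - f (i - ((k : ℕ) : ZMod n))
                = ((((i - f i).val - k : ℕ)) : ZMod n) := by
              rw [hfw, Nat.cast_sub (by omega), ZMod.natCast_zmod_val]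
              ring
            rw [e, ZMod.val_cast_of_lt (by omega)]
          rw [UpArc, hvw, hfw]
          intro t ht
          exact hdown t (by omega)
        exact fun hu => f_excl hn hac hwne ⟨hu, hdw⟩
    rw [root_F hv hF, key, ZMod.natCast_zmod_val]
    ring

lemma phi_sig_eq (hn : 3 ≤ n) {σ : ZMod n → S} (hv : Valid σ) :
    phiSig (sigSub hn σ) (rootF hv) = σ := by
  funext i
  cases hσi : σ i with
  | none => rw [phi_none_iff.mpr (root_none hv hσi)]
  | some b =>
    cases b with
    | true =>
      have hgu1 : 1 ≤ gU hv i := gU_pos hv hσi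
      have hgun : gU hv i ≤ n - 1 := gU_le hv i
      have hr : rootF hv i = i + ((gU hv i : ℕ) : ZMod n) := root_T hv hσi
      have hvne : rootF hv i ≠ i := by
        rw [hr]
        intro hh
        have hz : ((gU hv i : ℕ) : ZMod n) = 0 := by linear_combination hh
        exact natCast_ne_zero_zmod hgu1 (by omega) hz
      have hup : UpArc (sigSub hn σ).spanningCoe i (rootF hv i) := by
        rw [hr]
        refine upArc_of_eq_add (a := gU hv i) (by omega) rfl ?_
        intro t ht
        exact (sig_edge_iff hn σ _).mpr (Or.inl (gU_min hv i ht))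
      rw [phi_T_of hvne hup]
    | false =>
      have hgd1 : 1 ≤ gD hv i := gD_pos hv hσi
      have hgdn : gD hv i ≤ n - 1 := gD_le hv i
      have hr : rootF hv i = i - ((gD hv i : ℕ) : ZMod n) := root_F hv hσi
      have hvne : rootF hv i ≠ i := by
        rw [hr]
        intro hh
        have hz : ((gD hv i : ℕ) : ZMod n) = 0 := by linear_combination -hh
        exact natCast_ne_zero_zmod hgd1 (by omega) hz
      have hdw : UpArc (sigSub hn σ).spanningCoe (rootF hv i) i := by
        rw [hr]
        refine upArc_of_eq_add (a := gD hv i) (by omega) (by ring) ?_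
        intro t ht
        refine (sig_edge_iff hn σ _).mpr (Or.inr ?_)
        have e : i - ((gD hv i : ℕ) : ZMod n) + ((t : ℕ) : ZMod n) + 1
            = i - (((gD hv i - (t + 1) : ℕ)) : ZMod n) := by
          rw [Nat.cast_sub (by omega)]
          push_cast
          ring
        rw [e]
        exact gD_min hv i (by omega)
      have hnup : ¬ UpArc (sigSub hn σ).spanningCoe i (rootF hv i) := by
        intro hu
        exact not_upArc_both (sig_absent hn hv) (fun h => hvne h.symm) ⟨hu, hdw⟩
      rw [phi_F_of hvne hnup]

end Phi3

end RSFAux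


open Finset RSFAux in
/-- The number of rooted spanning forests of the cycle `C_n` (`n ≥ 3`) equals
`2 T_n(3/2) - 2`. -/
theorem numRootedSpanningForests_cycle (n : ℕ) (hn : 3 ≤ n) :
    haveI : NeZero n := ⟨by omega⟩
    (numRootedSpanningForests (cycleCirculant n) : ℝ) =
      2 * (Polynomial.Chebyshev.T ℝ n).eval (3 / 2) - 2 := by
  haveI : NeZero n := ⟨by omega⟩
  classical
  obtain ⟨m, rfl⟩ : ∃ m, n = m + 1 := ⟨n - 1, by omega⟩
  obtain ⟨k, rfl⟩ : ∃ k, m = k + 1 := ⟨m - 1, by omega⟩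
  have hcard : numRootedSpanningForests (cycleCirculant (k + 1 + 1))
      = Nat.card {σ : ZMod (k + 1 + 1) → S // Valid σ} := by
    rw [numRootedSpanningForests]
    refine Nat.card_congr
      { toFun := fun p => ⟨phiSig p.1.1 p.1.2, phi_valid hn p.2.2.1 p.2.2.2.1 p.2.2.2.2⟩
        invFun := fun s => ⟨(sigSub hn s.1, rootF s.2),
          ⟨fun v => Set.mem_univ v,
            acyclic_of_absent hn (sig_le hn s.1) (sig_absent hn s.2),
            fun v => reach_root hn s.2 v,
            fun u v h => root_reach_eq hn s.2 h⟩⟩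
        left_inv := ?_
        right_inv := ?_ }
    · rintro ⟨⟨H, f⟩, hsp, hac, hre, hco⟩
      apply Subtype.ext
      refine Prod.ext ?_ ?_
      · exact sig_phi_eq hn hsp hac hre hco
      · funext i
        exact root_phi_eq hn hac hre hco i
    · rintro ⟨σ, hv⟩
      apply Subtype.ext
      exact phi_sig_eq hn hv
  have h1 : Nat.card {σ : ZMod (k + 1 + 1) → S // Valid σ}
      = (Finset.univ.filter (fun σ : ZMod (k + 1 + 1) → S => Valid σ)).card := by
    rw [Nat.card_eq_fintype_card, Fintype.card_subtype]
  have h3 := card_cyc (k + 1)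
  have h2 : (Finset.univ.filter
        (fun σ : ZMod (k + 1 + 1) → S => ∀ i, Ok (σ i) (σ (i + 1)))).card
      = (Finset.univ.filter (fun σ : ZMod (k + 1 + 1) → S => Valid σ)).card + 2 := by
    set Cs := Finset.univ.filter
      (fun σ : ZMod (k + 1 + 1) → S => ∀ i, Ok (σ i) (σ (i + 1))) with hCs
    have hVeq : Finset.univ.filter (fun σ : ZMod (k + 1 + 1) → S => Valid σ)
        = Cs \ {fun _ => some true, fun _ => some false} := by
      ext σ
      rw [Finset.mem_filter, Finset.mem_sdiff, hCs, Finset.mem_filter]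
      simp only [hCs, Finset.mem_filter, Finset.mem_univ, true_and, Finset.mem_sdiff,
        Finset.mem_insert, Finset.mem_singleton, Valid, Cyc]
      constructor
      · rintro ⟨hc, ⟨i1, hh1⟩, ⟨i2, hh2⟩⟩
        refine ⟨hc, ?_⟩
        rintro (rfl | rfl)
        · exact hh1 rfl
        · exact hh2 rfl
      · rintro ⟨hc, hne⟩
        refine ⟨hc, ?_, ?_⟩
        · by_contra hno
          push_neg at hno
          exact hne (Or.inl (funext fun i => hno i))
        · by_contra hno
          push_neg at hno
          exact hne (Or.inr (funext fun i => hno i))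
    have hsub : ({fun _ => some true, fun _ => some false} : Finset (ZMod (k + 1 + 1) → S))
        ⊆ Cs := by
      intro x hx
      simp only [Finset.mem_insert, Finset.mem_singleton] at hx
      rcases hx with rfl | rfl <;> simp [hCs, Ok]
    have hTF : (fun _ : ZMod (k + 1 + 1) => (some true : S)) ≠ (fun _ => some false) := by
      intro h
      have := congrFun h 0
      simp at this
    have hcardpair : ({fun _ => some true, fun _ => some false} :
        Finset (ZMod (k + 1 + 1) → S)).card = 2 := by
      rw [Finset.card_insert_of_notMem (by simp [hTF]), Finset.card_singleton]
    have hle := Finset.card_le_card hsub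
    rw [hVeq, Finset.card_sdiff_of_subset hsub, hcardpair]
    omega
  have h4 := (cheb_pair k).1
  have hVcardR : (((Finset.univ.filter
        (fun σ : ZMod (k + 1 + 1) → S => Valid σ)).card : ℕ) : ℝ)
      = 2 * (Polynomial.Chebyshev.T ℝ ((k : ℤ) + 2)).eval (3 / 2) - 2 := by
    rw [← h4]
    rw [h3] at h2
    have : (Lnum (k + 1) : ℝ) = ((Finset.univ.filter
        (fun σ : ZMod (k + 1 + 1) → S => Valid σ)).card : ℝ) + 2 := by
      exact_mod_cast congrArg (fun x : ℕ => (x : ℝ)) h2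
    linarith [this]
  rw [hcard, h1, hVcardR]
  have hidx : ((k + 1 + 1 : ℕ) : ℤ) = (k : ℤ) + 2 := by push_cast; ring
  rw [hidx]
end

section
/- Let P(z) be a Laurent polynomial with real coefficients, symmetric under z ↦ 1/z, with no roots on the unit circle, with roots z_1, 1/z_1, ..., z_s, 1/z_s where |z_j| > 1, and leading coefficient -η·z^s appearing as P(z) = η·z^{-s}∏_j(z_j - z)(1/z_j - z) up to sign. Define f(n) = η^n ∏_{j=1}^s |2·T_n(w_j) - 2| with w_j = (1/2)(z_j + z_j^{-1}). Then f(n) ~ A^n as n → ∞, where A = η·∏_{j=1}^s |z_j| is the Mahler measure of P. -/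
/-!
Writing `w = (z + z⁻¹)/2`, the Dickson-polynomial identity `2 T_n(w) = zⁿ + z⁻ⁿ` gives
`2 T_n(w) - 2 = zⁿ (1 - z⁻ⁿ)²`. Hence `f(n) / Aⁿ = ∏_j |1 - z_j⁻ⁿ|²`, and every factor tends
to `1` because `|z_j| > 1`.
-/

open Polynomial Filter Topology

namespace Polynomial.Chebyshev

variable {R : Type*} [CommRing R] {x y w : R}

theorem two_mul_T_eval_eq_pow_add_pow (hxy : x * y = 1) (hw : 2 * w = x + y) (n : ℕ) :
    2 * (T R n).eval w = x ^ n + y ^ n := by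
  have h := congrArg (eval w) (C_comp_two_mul_X R n)
  rw [eval_comp, eval_mul, eval_ofNat, eval_X, hw, ← dickson_one_one_eq_chebyshev_C,
    dickson_one_one_eval_add_inv x y hxy, eval_mul, eval_ofNat] at h
  exact h.symm

theorem two_mul_T_eval_sub_two (hxy : x * y = 1) (hw : 2 * w = x + y) (n : ℕ) :
    2 * (T R n).eval w - 2 = x ^ n * (1 - y ^ n) ^ 2 := by
  have hxyn : x ^ n * y ^ n = 1 := by rw [← mul_pow, hxy, one_pow]
  rw [two_mul_T_eval_eq_pow_add_pow hxy hw]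
  linear_combination (2 - y ^ n) * hxyn

end Polynomial.Chebyshev

theorem tendsto_prod_norm_one_sub_inv_pow_sq {ι 𝕜 : Type*} [Fintype ι] [NormedDivisionRing 𝕜]
    {z : ι → 𝕜} (hz : ∀ j, 1 < ‖z j‖) :
    Tendsto (fun n : ℕ => ∏ j, ‖1 - (z j)⁻¹ ^ n‖ ^ 2) atTop (𝓝 1) := by
  have hfactor : ∀ j, Tendsto (fun n : ℕ => ‖1 - (z j)⁻¹ ^ n‖ ^ 2) atTop (𝓝 1) := fun j => by
    have hpow : Tendsto (fun n : ℕ => (z j)⁻¹ ^ n) atTop (𝓝 0) :=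
      tendsto_pow_atTop_nhds_zero_of_norm_lt_one <| by
        rw [norm_inv]; exact inv_lt_one_of_one_lt₀ (hz j)
    simpa using ((tendsto_const_nhds (x := (1 : 𝕜))).sub hpow).norm.pow 2
  simpa using tendsto_finsetProd Finset.univ fun j _ => hfactor j

/-- Let `z_1, …, z_s` be complex numbers with `|z_j| > 1` (the roots outside the
unit circle of a palindromic real Laurent polynomial with no roots on the unit
circle and leading coefficient of absolute value `η > 0`).  Setting
`w_j = (z_j + z_j⁻¹)/2` and `f(n) = ηⁿ ∏_j |2 T_n(w_j) - 2|`, one has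
`f(n) ~ Aⁿ` as `n → ∞`, where `A = η ∏_j |z_j|` is the Mahler measure. -/
theorem forest_asymptotics {s : ℕ} (η : ℝ) (hη : 0 < η)
    (z : Fin s → ℂ) (hz : ∀ j, 1 < ‖z j‖)
    (f : ℕ → ℝ)
    (hf : ∀ n, f n = η ^ n * ∏ j : Fin s,
      ‖2 * (Polynomial.Chebyshev.T ℂ n).eval ((1 / 2 : ℂ) * (z j + (z j)⁻¹)) - 2‖)
    (A : ℝ) (hA : A = η * ∏ j : Fin s, ‖z j‖) :
    Tendsto (fun n : ℕ => f n / A ^ n) atTop (nhds 1) := by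
  have hz0 : ∀ j, z j ≠ 0 := fun j => norm_pos_iff.mp (one_pos.trans (hz j))
  have hratio : ∀ n : ℕ, f n / A ^ n = ∏ j, ‖1 - (z j)⁻¹ ^ n‖ ^ 2 := fun n => by
    simp_rw [hf, hA, Chebyshev.two_mul_T_eval_sub_two (mul_inv_cancel₀ (hz0 _))
      (by ring : 2 * ((1 / 2 : ℂ) * (z _ + (z _)⁻¹)) = _), norm_mul, norm_pow,
      Finset.prod_mul_distrib, mul_pow, Finset.prod_pow]
    have hη0 : η ^ n ≠ 0 := pow_ne_zero n hη.ne'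
    have hprod : (∏ j, ‖z j‖) ^ n ≠ 0 :=
      pow_ne_zero n (Finset.prod_ne_zero_iff.2 fun j _ => norm_ne_zero_iff.2 (hz0 j))
    field_simp
  exact (tendsto_prod_norm_one_sub_inv_pow_sq hz).congr fun n => (hratio n).symm
end

section
/- Let p(z) be a nonzero polynomial with complex coefficients and no roots on the unit circle. Then the Mahler measure M(p) = |c|·∏_{|α|>1}|α| (product over roots α of p with |α| > 1, c the leading coefficient) satisfies M(p) = exp(∫_0^1 log|p(e^{2πit})| dt). -/
/-! Jensen's formula gives `∫ log |e^{iθ} - α| dθ / 2π = log⁺ |α|`, so the average of `log |p|` over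
the unit circle is `log |c| + ∑ log⁺ |α|`; Mathlib records this as
`Polynomial.mahlerMeasure_eq_leadingCoeff_mul_prod_roots`, and it remains to reparametrize the
circle by `t ↦ e^{2πit}`. -/

open Polynomial Real

lemma Multiset.prod_map_max_one {α M : Type*} [CommMonoid M] [LinearOrder M] (f : α → M)
    (s : Multiset α) :
    (s.map fun a => max 1 (f a)).prod = ((s.filter fun a => 1 < f a).map f).prod := by
  induction s using Multiset.induction_on with
  | empty => simp
  | cons a s ih =>
    by_cases h : 1 < f a
    · simp [h, ih, max_eq_right h.le]
    · simp [h, ih, max_eq_left (not_lt.1 h)]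

lemma circleAverage_eq_integral_circleMap_two_pi_mul {E : Type*} [NormedAddCommGroup E]
    [NormedSpace ℝ E] (f : ℂ → E) (c : ℂ) (R : ℝ) :
    circleAverage f c R = ∫ t in (0:ℝ)..1, f (circleMap c R (2 * π * t)) := by
  rw [intervalIntegral.integral_comp_mul_left (fun θ => f (circleMap c R θ)) (by positivity),
    mul_zero, mul_one, circleAverage_def]

lemma Polynomial.mahlerMeasure_eq_exp_logMahlerMeasure {p : ℂ[X]} (hp : p ≠ 0) :
    p.mahlerMeasure = exp p.logMahlerMeasure := by
  simp [mahlerMeasure, hp]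

theorem mahler_measure_eq_exp_integral_general (p : Polynomial ℂ) (hp : p ≠ 0) :
    ‖p.leadingCoeff‖ *
        ((p.roots.filter fun α => 1 < ‖α‖).map (fun α : ℂ => ‖α‖)).prod =
      Real.exp (∫ t in (0:ℝ)..1,
        Real.log ‖p.eval (Complex.exp (2 * π * Complex.I * t))‖) := by
  have hexp (t : ℝ) : Complex.exp (2 * π * Complex.I * t) = circleMap 0 1 (2 * π * t) := by
    simp only [circleMap, zero_add, Complex.ofReal_one, one_mul]
    push_cast
    ring_nf
  rw [← Multiset.prod_map_max_one, ← mahlerMeasure_eq_leadingCoeff_mul_prod_roots,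
    mahlerMeasure_eq_exp_logMahlerMeasure hp, logMahlerMeasure_def,
    circleAverage_eq_integral_circleMap_two_pi_mul]
  simp_rw [hexp]

/-- For a nonzero complex polynomial `p` with no roots on the unit circle, the
Mahler measure `M(p) = |c| ∏_{|α|>1} |α|` (over the roots `α` of `p` with
multiplicity, `c` the leading coefficient) satisfies
`M(p) = exp (∫_0^1 log |p(e^{2πit})| dt)`. -/
theorem mahler_measure_eq_exp_integral (p : Polynomial ℂ) (hp : p ≠ 0)
    (hcirc : ∀ z : ℂ, ‖z‖ = 1 → p.eval z ≠ 0) :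
    ‖p.leadingCoeff‖ *
        ((p.roots.filter fun α => 1 < ‖α‖).map (fun α : ℂ => ‖α‖)).prod =
      Real.exp (∫ t in (0:ℝ)..1,
        Real.log ‖p.eval (Complex.exp (2 * π * Complex.I * t))‖) :=
  mahler_measure_eq_exp_integral_general p hp
end
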